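/- arXiv:1810.07114 — 12 statements merged into one kernel-verified Lean document; each statement's English description precedes it below -/
import Mathlib

section
/- Let A be a semisimple (finite-dimensional) algebra over a field k and μ : A → k a nonzero multiplicative functional. Then there exists a central idempotent P ∈ A such that L_μ = R_μ = k·P, where L_μ and R_μ are the spaces of left and right μ-integrals. In particular dim L_μ = dim R_μ = 1. -/
/-- The submodule of left `μ`-integrals in `A`. -/
def leftIntegrals (k : Type*) {A : Type*} [Field k] [Ring A] [Algebra k A]
    (μ : A →ₐ[k] k) : Submodule k A where
  carrier := {Λ : A | ∀ a : A, a * Λ = μ a • Λ}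
  add_mem' := by
    intro x y hx hy a
    simp only [Set.mem_setOf_eq] at *
    rw [mul_add, hx a, hy a, smul_add]
  zero_mem' := by intro a; simp
  smul_mem' := by
    intro c x hx a
    simp only [Set.mem_setOf_eq] at *
    rw [mul_smul_comm, hx a, smul_comm]

/-- The submodule of right `μ`-integrals in `A`. -/
def rightIntegrals (k : Type*) {A : Type*} [Field k] [Ring A] [Algebra k A]
    (μ : A →ₐ[k] k) : Submodule k A where
  carrier := {Λ : A | ∀ a : A, Λ * a = μ a • Λ}
  add_mem' := by
    intro x y hx hy a
    simp only [Set.mem_setOf_eq] at *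
    rw [add_mul, hx a, hy a, smul_add]
  zero_mem' := by intro a; simp
  smul_mem' := by
    intro c x hx a
    simp only [Set.mem_setOf_eq] at *
    rw [smul_mul_assoc, hx a, smul_comm]

lemma aux_left_integral_ker_eq_zero {k A : Type*} [Field k] [Ring A] [Algebra k A]
    [IsSemisimpleRing A] (μ : A →ₐ[k] k) (w : A)
    (hw : ∀ a : A, a * w = μ a • w) (hμw : μ w = 0) : w = 0 := by
  obtain ⟨D, hD⟩ := exists_isCompl (Submodule.span A ({w} : Set A))
  have h1 : (1 : A) ∈ Submodule.span A ({w} : Set A) ⊔ D := by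
    rw [hD.sup_eq_top]; trivial
  obtain ⟨n, hn, c, hc, hnc⟩ := Submodule.mem_sup.mp h1
  obtain ⟨a, ha⟩ := Submodule.mem_span_singleton.mp hn
  have hww : w * w = 0 := by rw [hw w, hμw, zero_smul]
  have hwn : w * n = 0 := by
    rw [← ha, smul_eq_mul, hw a, mul_smul_comm, hww, smul_zero]
  have hwD : w ∈ D := by
    have hwc : w = w * c := by
      have := congrArg (fun x => w * x) hnc
      simpa [mul_add, hwn] using this.symm
    rw [hwc]
    simpa [smul_eq_mul] using D.smul_mem w hc
  exact (Submodule.disjoint_def.mp hD.disjoint) w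
    (Submodule.mem_span_singleton_self w) hwD

/-- For a semisimple finite-dimensional algebra `A` and a nonzero multiplicative
functional `μ`, there is a central idempotent `P` with
`L_μ = R_μ = k•P`; in particular both spaces are one-dimensional. -/
theorem semisimple_integrals_span_central_idempotent
    (k A : Type*) [Field k] [Ring A] [Algebra k A]
    [IsSemisimpleRing A] [FiniteDimensional k A]
    (μ : A →ₐ[k] k) (hμ : ∃ a, μ a ≠ 0) :
    ∃ P : A, IsIdempotentElem P ∧ P ≠ 0 ∧ (∀ a : A, a * P = P * a) ∧
      leftIntegrals k μ = Submodule.span k {P} ∧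
      rightIntegrals k μ = Submodule.span k {P} ∧
      Module.finrank k (leftIntegrals k μ) = 1 ∧
      Module.finrank k (rightIntegrals k μ) = 1 := by
  -- the kernel of μ as a left ideal
  let K : Submodule A A :=
    { carrier := {x : A | μ x = 0}
      add_mem' := by intro x y hx hy; simp only [Set.mem_setOf_eq] at *
                     rw [map_add, hx, hy, add_zero]
      zero_mem' := by simp
      smul_mem' := by intro a x hx; simp only [Set.mem_setOf_eq] at *
                      rw [smul_eq_mul, map_mul, hx, mul_zero] }
  obtain ⟨C, hC⟩ := exists_isCompl K
  have h1 : (1 : A) ∈ K ⊔ C := by rw [hC.sup_eq_top]; trivial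
  obtain ⟨u, hu, v, hv, huv⟩ := Submodule.mem_sup.mp h1
  have hμu : μ u = 0 := hu
  have hμv : μ v = 1 := by
    have := congrArg μ huv
    simpa [hμu] using this
  -- v is a left integral
  have hvL : ∀ a : A, a * v = μ a • v := by
    intro a
    have hK : a * v - μ a • v ∈ K := by
      show μ (a * v - μ a • v) = 0
      rw [map_sub, map_mul, map_smul, hμv, mul_one, smul_eq_mul, mul_one, sub_self]
    have hCm : a * v - μ a • v ∈ C := by
      refine sub_mem ?_ (C.smul_of_tower_mem (μ a) hv)
      simpa [smul_eq_mul] using C.smul_mem a hv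
    have := (Submodule.disjoint_def.mp hC.disjoint) _ hK hCm
    exact sub_eq_zero.mp this
  -- v is also a right integral
  have hvR : ∀ a : A, v * a = μ a • v := by
    intro a
    have hw : ∀ b : A, b * (v * a - μ a • v) = μ b • (v * a - μ a • v) := by
      intro b
      rw [mul_sub, ← mul_assoc, hvL b, smul_mul_assoc, mul_smul_comm, hvL b,
        smul_sub, smul_comm (μ b) (μ a)]
    have hμw : μ (v * a - μ a • v) = 0 := by
      rw [map_sub, map_mul, map_smul, hμv, one_mul, smul_eq_mul, mul_one, sub_self]
    exact sub_eq_zero.mp (aux_left_integral_ker_eq_zero μ _ hw hμw)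
  have hv0 : v ≠ 0 := fun h => by simp [h] at hμv
  have hL : leftIntegrals k μ = Submodule.span k {v} := by
    apply le_antisymm
    · intro x hx
      have hx' : ∀ a : A, a * x = μ a • x := hx
      have h1 : v * x = x := by rw [hx' v, hμv, one_smul]
      have h2 : v * x = μ x • v := hvR x
      rw [Submodule.mem_span_singleton]
      exact ⟨μ x, by rw [← h2, h1]⟩
    · rw [Submodule.span_le, Set.singleton_subset_iff]
      exact fun a => hvL a
  have hR : rightIntegrals k μ = Submodule.span k {v} := by
    apply le_antisymm
    · intro x hx
      have hx' : ∀ a : A, x * a = μ a • x := hx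
      have h1 : x * v = x := by rw [hx' v, hμv, one_smul]
      have h2 : x * v = μ x • v := hvL x
      rw [Submodule.mem_span_singleton]
      exact ⟨μ x, by rw [← h2, h1]⟩
    · rw [Submodule.span_le, Set.singleton_subset_iff]
      exact fun a => hvR a
  refine ⟨v, ?_, hv0, ?_, hL, hR, ?_, ?_⟩
  · show v * v = v
    rw [hvL v, hμv, one_smul]
  · intro a; rw [hvL a, hvR a]
  · rw [hL]; exact finrank_span_singleton hv0
  · rw [hR]; exact finrank_span_singleton hv0
end

section
/- Let (A, σ) be a Frobenius algebra over a field k and μ : A → k a nonzero multiplicative functional. Then the space of left μ-integrals L_μ and the space of right μ-integrals R_μ are both one-dimensional. -/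
lemma surj_of_nondeg {k A : Type*} [Field k] [Ring A] [Algebra k A] [FiniteDimensional k A]
    (B : A →ₗ[k] A →ₗ[k] k) (hnd : ∀ a : A, (∀ b : A, B a b = 0) → a = 0) :
    Function.Surjective B := by
  have hinj : Function.Injective B := by
    rw [← LinearMap.ker_eq_bot, LinearMap.ker_eq_bot']
    intro a ha
    exact hnd a fun b => by rw [ha]; rfl
  exact (LinearMap.injective_iff_surjective_of_finrank_eq_finrank
    (Subspace.dual_finrank_eq (V := A)).symm).mp hinj

lemma dim_one_of_integrals {k A : Type*} [Field k] [Ring A] [Algebra k A] [FiniteDimensional k A]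
    (S : Submodule k A) (B : A →ₗ[k] A →ₗ[k] k)
    (hnd : ∀ a : A, (∀ b : A, B a b = 0) → a = 0)
    (μ : A →ₐ[k] k) (hμ : ∃ a, μ a ≠ 0)
    (hmem : ∀ Λ : A, (∀ b, B Λ b = μ b) → Λ ∈ S)
    (hprop : ∀ w ∈ S, ∀ b, B w b = μ b * B w 1) :
    Module.finrank k S = 1 := by
  obtain ⟨Λ, hΛ⟩ := surj_of_nondeg B hnd μ.toLinearMap
  have hΛ' : ∀ b, B Λ b = μ b := fun b => by rw [hΛ]; rfl
  obtain ⟨a, ha⟩ := hμ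
  have hΛ0 : Λ ≠ 0 := by
    intro h
    apply ha
    rw [← hΛ' a, h, map_zero, LinearMap.zero_apply]
  apply finrank_eq_one (⟨Λ, hmem Λ hΛ'⟩ : S)
  · intro h
    exact hΛ0 (congrArg Subtype.val h)
  · rintro ⟨w, hw⟩
    refine ⟨B w 1, Subtype.ext ?_⟩
    have h0 : w - B w 1 • Λ = 0 := by
      apply hnd
      intro b
      simp only [map_sub, map_smul, LinearMap.sub_apply, LinearMap.smul_apply,
        smul_eq_mul, hprop w hw b, hΛ' b]
      ring
    have := sub_eq_zero.mp h0
    simp only [SetLike.mk_smul_mk]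
    exact this.symm


/-- For a Frobenius algebra `(A, σ)` and a nonzero multiplicative functional `μ`,
the spaces of left and right `μ`-integrals are both one-dimensional. -/
theorem frobenius_integrals_one_dimensional
    (k A : Type*) [Field k] [Ring A] [Algebra k A] [FiniteDimensional k A]
    (σ : A →ₗ[k] A →ₗ[k] k)
    (hnd₁ : ∀ a : A, (∀ b : A, σ a b = 0) → a = 0)
    (hnd₂ : ∀ b : A, (∀ a : A, σ a b = 0) → b = 0)
    (hassoc : ∀ a b c : A, σ (a * b) c = σ a (b * c))
    (μ : A →ₐ[k] k) (hμ : ∃ a, μ a ≠ 0) :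
    Module.finrank k (leftIntegrals k μ) = 1 ∧
    Module.finrank k (rightIntegrals k μ) = 1 := by
  constructor
  · apply dim_one_of_integrals _ σ.flip (fun a h => hnd₂ a h) μ hμ
    · intro Λ hΛ a
      simp only [LinearMap.flip_apply] at hΛ
      have h0 : a * Λ - μ a • Λ = 0 := by
        apply hnd₂
        intro b
        simp only [map_sub, map_smul, LinearMap.smul_apply, smul_eq_mul]
        have : σ b (a * Λ) = μ (b * a) := by rw [← hassoc]; exact hΛ (b * a)
        rw [this, map_mul, hΛ b]
        ring
      exact sub_eq_zero.mp h0
    · intro w hw b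
      simp only [LinearMap.flip_apply]
      have h1 : σ (1 * b) w = σ 1 (b * w) := hassoc 1 b w
      rw [one_mul] at h1
      have : σ b w = σ 1 (μ b • w) := by rw [h1, hw b]
      simpa [smul_eq_mul] using this
  · apply dim_one_of_integrals _ σ hnd₁ μ hμ
    · intro Λ hΛ a
      have h0 : Λ * a - μ a • Λ = 0 := by
        apply hnd₁
        intro b
        simp only [map_sub, map_smul, LinearMap.sub_apply, LinearMap.smul_apply, smul_eq_mul]
        rw [hassoc, hΛ (a * b), map_mul, hΛ b]
        ring
      exact sub_eq_zero.mp h0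
    · intro w hw b
      have h1 : σ (w * b) 1 = σ w (b * 1) := hassoc w b 1
      rw [mul_one] at h1
      have : σ (μ b • w) 1 = σ w b := by rw [← h1, hw b]
      rw [map_smul] at this
      simpa [smul_eq_mul, eq_comm] using this
end

section
/- Let (A, σ) be a Frobenius algebra over a field k. Every one-dimensional left (or right) ideal L ⊂ A is a two-sided ideal and is of the form L = L_μ for a unique multiplicative functional μ : A → k. -/
/-- In a Frobenius algebra, every one-dimensional left (or right) ideal is a
two-sided ideal and equals `L_μ` for a unique multiplicative functional `μ`. -/
theorem frobenius_one_dim_ideal_eq_leftIntegrals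
    (k A : Type*) [Field k] [Ring A] [Algebra k A] [FiniteDimensional k A]
    (σ : A →ₗ[k] A →ₗ[k] k)
    (hnd₁ : ∀ a : A, (∀ b : A, σ a b = 0) → a = 0)
    (hnd₂ : ∀ b : A, (∀ a : A, σ a b = 0) → b = 0)
    (hassoc : ∀ a b c : A, σ (a * b) c = σ a (b * c))
    (L : Submodule k A) (hdim : Module.finrank k L = 1)
    (hideal : (∀ (a : A), ∀ x ∈ L, a * x ∈ L) ∨ (∀ (a : A), ∀ x ∈ L, x * a ∈ L)) :
    (∀ (a : A), ∀ x ∈ L, a * x ∈ L ∧ x * a ∈ L) ∧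
    ∃! μ : A →ₐ[k] k, L = leftIntegrals k μ := by
  classical
  rw [finrank_eq_one_iff'] at hdim
  obtain ⟨⟨Λ, hΛL⟩, hΛ0, hv⟩ := hdim
  have hΛ0' : Λ ≠ 0 := fun h => hΛ0 (Subtype.ext h)
  have hmem : ∀ x ∈ L, ∃ c : k, x = c • Λ := by
    intro x hx
    obtain ⟨c, hc⟩ := hv ⟨x, hx⟩
    exact ⟨c, (congrArg Subtype.val hc).symm⟩
  have hcancel : ∀ c c' : k, c • Λ = c' • Λ → c = c' := by
    intro c c' h
    by_contra hne
    have h0 : (c - c') • Λ = 0 := by rw [sub_smul, h, sub_self]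
    have : Λ = 0 := by
      have h1 := congrArg (fun y => (c - c')⁻¹ • y) h0
      simpa [smul_smul, inv_mul_cancel₀ (sub_ne_zero.mpr hne)] using h1
    exact hΛ0' this
  have inj₁ : ∀ x y : A, (∀ b, σ x b = σ y b) → x = y := by
    intro x y h
    have hz := hnd₁ (x - y) (fun b => by
      rw [map_sub, LinearMap.sub_apply, h b, sub_self])
    exact sub_eq_zero.mp hz
  have inj₂ : ∀ x y : A, (∀ a, σ a x = σ a y) → x = y := by
    intro x y h
    have hz := hnd₂ (x - y) (fun a => by
      rw [map_sub, h a, sub_self])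
    exact sub_eq_zero.mp hz
  -- L is a left ideal in both cases
  have hLleft : ∀ (a : A), ∀ x ∈ L, a * x ∈ L := by
    rcases hideal with h | h
    · exact h
    · -- right-ideal case
      have hν : ∀ b : A, ∃ c : k, Λ * b = c • Λ := fun b => hmem _ (h b Λ hΛL)
      choose ν hν using hν
      have hσΛ : ∀ b, σ Λ b = ν b * σ 1 Λ := by
        intro b
        calc σ Λ b = σ (1 * Λ) b := by rw [one_mul]
          _ = σ 1 (Λ * b) := hassoc 1 Λ b
          _ = σ 1 (ν b • Λ) := by rw [hν b]
          _ = ν b * σ 1 Λ := by rw [map_smul, smul_eq_mul]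
      have h1Λ : σ 1 Λ ≠ 0 := by
        intro h0
        exact hΛ0' (hnd₁ Λ (fun b => by rw [hσΛ b, h0, mul_zero]))
      intro a x hx
      have haΛ : a * Λ = (σ a Λ / σ 1 Λ) • Λ := by
        apply inj₁
        intro b
        calc σ (a * Λ) b = σ a (Λ * b) := hassoc a Λ b
          _ = σ a (ν b • Λ) := by rw [hν b]
          _ = ν b * σ a Λ := by rw [map_smul, smul_eq_mul]
          _ = (σ a Λ / σ 1 Λ) * (ν b * σ 1 Λ) := by
              field_simp
          _ = (σ a Λ / σ 1 Λ) * σ Λ b := by rw [hσΛ b]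
          _ = σ ((σ a Λ / σ 1 Λ) • Λ) b := by
              rw [map_smul, LinearMap.smul_apply, smul_eq_mul]
      obtain ⟨c, hc⟩ := hmem x hx
      have : a * x = (c * (σ a Λ / σ 1 Λ)) • Λ := by
        rw [hc, mul_smul_comm, haΛ, smul_smul]
      rw [this]
      exact L.smul_mem _ hΛL
  -- define μ
  have hμex : ∀ a : A, ∃ c : k, a * Λ = c • Λ := fun a => hmem _ (hLleft a Λ hΛL)
  choose μf hμ using hμex
  have μ1 : μf 1 = 1 := hcancel _ _ (by rw [← hμ 1, one_mul, one_smul])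
  have μmul : ∀ a b, μf (a * b) = μf a * μf b := by
    intro a b
    apply hcancel
    rw [← hμ (a * b), mul_assoc, hμ b, mul_smul_comm, hμ a, smul_smul, mul_comm (μf b)]
  have μadd : ∀ a b, μf (a + b) = μf a + μf b := by
    intro a b
    apply hcancel
    rw [← hμ (a + b), add_mul, hμ a, hμ b, add_smul]
  have μzero : μf 0 = 0 := hcancel _ _ (by rw [← hμ 0, zero_mul, zero_smul])
  have μcomm : ∀ r : k, μf (algebraMap k A r) = r := by
    intro r
    apply hcancel
    rw [← hμ (algebraMap k A r), Algebra.smul_def]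
  let μ : A →ₐ[k] k :=
    { toFun := μf
      map_one' := μ1
      map_mul' := μmul
      map_zero' := μzero
      map_add' := μadd
      commutes' := fun r => by simpa using μcomm r }
  have hμ' : ∀ a : A, a * Λ = μ a • Λ := hμ
  -- key sigma facts
  have hσint : ∀ x : A, (∀ a : A, a * x = μ a • x) → ∀ a, σ a x = μ a * σ x 1 := by
    intro x hx a
    calc σ a x = σ a (x * 1) := by rw [mul_one]
      _ = σ (a * x) 1 := (hassoc a x 1).symm
      _ = σ (μ a • x) 1 := by rw [hx a]
      _ = μ a * σ x 1 := by rw [map_smul, LinearMap.smul_apply, smul_eq_mul]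
  have hΛint : ∀ a : A, a * Λ = μ a • Λ := hμ
  have hσΛ : ∀ a, σ a Λ = μ a * σ Λ 1 := hσint Λ hΛint
  have hΛ1 : σ Λ 1 ≠ 0 := by
    intro h0
    exact hΛ0' (hnd₂ Λ (fun a => by rw [hσΛ a, h0, mul_zero]))
  have hLeq : L = leftIntegrals k μ := by
    apply le_antisymm
    · intro x hx
      obtain ⟨c, hc⟩ := hmem x hx
      intro a
      rw [hc, mul_smul_comm, hΛint a, smul_comm]
    · intro x hx
      have hx' : ∀ a : A, a * x = μ a • x := hx
      have hcx : x = (σ x 1 / σ Λ 1) • Λ := by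
        apply inj₂
        intro a
        calc σ a x = μ a * σ x 1 := hσint x hx' a
          _ = (σ x 1 / σ Λ 1) * (μ a * σ Λ 1) := by field_simp
          _ = (σ x 1 / σ Λ 1) * σ a Λ := by rw [hσΛ a]
          _ = σ a ((σ x 1 / σ Λ 1) • Λ) := by
              rw [map_smul, smul_eq_mul]
      rw [hcx]
      exact L.smul_mem _ hΛL
  -- right multiplication
  have hLright : ∀ (a : A), ∀ x ∈ L, x * a ∈ L := by
    intro a x hx
    have hΛa : Λ * a = (σ Λ a / σ Λ 1) • Λ := by
      apply inj₂
      intro b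
      calc σ b (Λ * a) = σ (b * Λ) a := (hassoc b Λ a).symm
        _ = σ (μ b • Λ) a := by rw [hΛint b]
        _ = μ b * σ Λ a := by rw [map_smul, LinearMap.smul_apply, smul_eq_mul]
        _ = (σ Λ a / σ Λ 1) * (μ b * σ Λ 1) := by field_simp
        _ = (σ Λ a / σ Λ 1) * σ b Λ := by rw [hσΛ b]
        _ = σ b ((σ Λ a / σ Λ 1) • Λ) := by rw [map_smul, smul_eq_mul]
    obtain ⟨c, hc⟩ := hmem x hx
    have : x * a = (c * (σ Λ a / σ Λ 1)) • Λ := by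
      rw [hc, smul_mul_assoc, hΛa, smul_smul]
    rw [this]
    exact L.smul_mem _ hΛL
  refine ⟨fun a x hx => ⟨hLleft a x hx, hLright a x hx⟩, μ, hLeq, ?_⟩
  intro μ' hμ'eq
  apply AlgHom.ext
  intro a
  have hΛμ' : a * Λ = μ' a • Λ := by
    have : Λ ∈ leftIntegrals k μ' := hμ'eq ▸ hΛL
    exact this a
  exact hcancel _ _ (by rw [← hΛμ', hμ' a])
end

section
/- Let A be a finite-dimensional algebra over a field k (not assumed unital). If A admits a faithful functional ω (meaning ω(ab) = 0 for all b implies a = 0), then A is unital. -/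
/-- A finite-dimensional (not necessarily unital) algebra admitting a faithful
functional is unital. -/
theorem faithful_functional_implies_unital
    (k A : Type*) [Field k] [NonUnitalRing A] [Module k A]
    [SMulCommClass k A A] [IsScalarTower k A A] [FiniteDimensional k A]
    (ω : A →ₗ[k] k) (hω : ∀ a : A, (∀ b : A, ω (a * b) = 0) → a = 0) :
    ∃ e : A, ∀ a : A, e * a = a ∧ a * e = a := by
  set φ : A →ₗ[k] Module.Dual k A := (LinearMap.mul k A).compr₂ ω with hφ
  have hφ_apply : ∀ a b : A, φ a b = ω (a * b) := fun a b => rfl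
  have hinj : Function.Injective φ := by
    rw [← LinearMap.ker_eq_bot, LinearMap.ker_eq_bot']
    intro a ha
    exact hω a fun b => by
      have := congrFun (congrArg DFunLike.coe ha) b
      simpa [hφ_apply] using this
  have hsurj : Function.Surjective φ :=
    (LinearMap.injective_iff_surjective_of_finrank_eq_finrank
      (Subspace.dual_finrank_eq (K := k) (V := A)).symm).mp hinj
  obtain ⟨e, he⟩ := hsurj ω
  have heω : ∀ c : A, ω (e * c) = ω c := fun c => by
    have := congrFun (congrArg DFunLike.coe he) c
    simpa [hφ_apply] using this
  have hleft : ∀ a : A, e * a = a := by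
    intro a
    have h : e * a - a = 0 := by
      apply hω
      intro b
      have hb : (e * a - a) * b = e * (a * b) - a * b := by
        rw [sub_mul, mul_assoc]
      rw [hb, map_sub, heω, sub_self]
    exact sub_eq_zero.mp h
  refine ⟨e, fun a => ⟨hleft a, ?_⟩⟩
  have h : a * e - a = 0 := by
    apply hω
    intro b
    have hb : (a * e - a) * b = a * (e * b) - a * b := by
      rw [sub_mul, mul_assoc]
    rw [hb, hleft b, sub_self, map_zero]
  exact sub_eq_zero.mp h
end

section
/- Let H be a Hopf algebra with invertible antipode and A ⊂ H a nonzero subalgebra (not assumed unital) satisfying Δ(A) ⊂ H ⊗ A. If A admits a left unit or a right unit, then the unit 1_H of H belongs to A. -/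
/-!
If `y` is a one-sided unit of `S` and `a ∈ S` has `ε(a) ≠ 0` (such an `a` exists because
`a = (id ⊗ ε) Δ(a)` would vanish otherwise), then contracting `Δ(a) ∈ H ⊗ S` against the
antipode absorbs `y`: for a right unit, `ε(a) y = ∑ S(a₁) a₂ y = ∑ S(a₁) a₂ = ε(a)`; for a left
unit, `ε(a) S(y) = ∑ a₁ S(y a₂) = ∑ a₁ S(a₂) = ε(a)`. Hence `y = 1`, using injectivity of `S`
in the second case.
-/

open scoped TensorProduct
open Coalgebra HopfAlgebra

section Coalgebra

variable {k C : Type*} [CommSemiring k] [AddCommMonoid C] [Module k C] [Coalgebra k C]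

theorem eq_zero_of_comul_mem_span_of_counit_eq_zero {T : Set C} {a : C}
    (ha : comul (R := k) a ∈ Submodule.span k {t : C ⊗[k] C | ∃ x y : C, y ∈ T ∧ t = x ⊗ₜ[k] y})
    (hT : ∀ y ∈ T, counit (R := k) y = 0) :
    a = 0 := by
  have hvanish : (counit (R := k)).lTensor C (comul a) = 0 := by
    refine LinearMap.eqOn_span' (g := 0) ?_ ha
    rintro _ ⟨x, y, hy, rfl⟩
    simp [hT y hy]
  simpa using congrArg (TensorProduct.rid k C) ((lTensor_counit_comul a).symm.trans hvanish)

end Coalgebra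

section HopfAlgebra

variable {k H : Type*} [CommSemiring k] [Semiring H] [HopfAlgebra k H]

theorem counit_smul_eq_counit_smul_one_of_mul_right_unit {T : Set H} {a y : H}
    (ha : comul (R := k) a ∈ Submodule.span k {t : H ⊗[k] H | ∃ x z : H, z ∈ T ∧ t = x ⊗ₜ[k] z})
    (hy : ∀ z ∈ T, z * y = z) :
    counit (R := k) a • y = counit (R := k) a • (1 : H) := by
  let φ : H ⊗[k] H →ₗ[k] H := LinearMap.mul' k H ∘ₗ (antipode k).rTensor H
  have habsorb : (LinearMap.mulRight k y ∘ₗ φ) (comul a) = φ (comul a) := by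
    refine LinearMap.eqOn_span' ?_ ha
    rintro _ ⟨x, z, hz, rfl⟩
    simp [φ, mul_assoc, hy z hz]
  simpa [φ, Algebra.smul_def] using habsorb

theorem counit_smul_antipode_eq_counit_smul_one_of_mul_left_unit {T : Set H} {a y : H}
    (ha : comul (R := k) a ∈ Submodule.span k {t : H ⊗[k] H | ∃ x z : H, z ∈ T ∧ t = x ⊗ₜ[k] z})
    (hy : ∀ z ∈ T, y * z = z) :
    counit (R := k) a • antipode k y = counit (R := k) a • (1 : H) := by
  let φ : H ⊗[k] H →ₗ[k] H := LinearMap.mul' k H ∘ₗ (antipode k).lTensor H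
  have habsorb : (LinearMap.mulRight k (antipode k y) ∘ₗ φ) (comul a) = φ (comul a) := by
    refine LinearMap.eqOn_span' ?_ ha
    rintro _ ⟨x, z, hz, rfl⟩
    simp [φ, mul_assoc, ← antipode_mul_antidistrib, hy z hz]
  simpa [φ, Algebra.smul_def] using habsorb

end HopfAlgebra

/-- If a nonzero (not necessarily unital) subalgebra `S` of a Hopf algebra `H`
satisfies `Δ(S) ⊆ H ⊗ S` and admits a left or a right unit, then `1_H ∈ S`. -/
theorem one_mem_of_coideal_subalgebra_with_one_sided_unit
    (k H : Type*) [Field k] [Ring H] [HopfAlgebra k H]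
    (hS : Function.Bijective (HopfAlgebra.antipode (R := k) (A := H)))
    (S : NonUnitalSubalgebra k H) (hne : ∃ s ∈ S, s ≠ (0 : H))
    (hcoid : ∀ a ∈ S, Coalgebra.comul (R := k) a ∈
      Submodule.span k {t : H ⊗[k] H | ∃ x y : H, y ∈ S ∧ t = x ⊗ₜ[k] y})
    (hunit : (∃ y ∈ S, ∀ a ∈ S, y * a = a) ∨ (∃ y ∈ S, ∀ a ∈ S, a * y = a)) :
    (1 : H) ∈ S := by
  obtain ⟨a, haS, ha⟩ : ∃ a ∈ S, counit (R := k) a ≠ 0 := by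
    obtain ⟨s, hs, hs0⟩ := hne
    by_contra! hcounit
    exact hs0 (eq_zero_of_comul_mem_span_of_counit_eq_zero (hcoid s hs) hcounit)
  have hcancel := smul_right_injective H ha
  rcases hunit with ⟨y, hyS, hy⟩ | ⟨y, hyS, hy⟩
  · have hSy : antipode k y = antipode k 1 := by
      rw [antipode_one]
      exact hcancel (counit_smul_antipode_eq_counit_smul_one_of_mul_left_unit (hcoid a haS) hy)
    simpa [hS.injective hSy] using hyS
  · have hy1 : y = 1 :=
      hcancel (counit_smul_eq_counit_smul_one_of_mul_right_unit (hcoid a haS) hy)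
    simpa [hy1] using hyS
end

section
/- Let H be a Hopf algebra with invertible antipode, Λ ∈ H an element of integral type (Δ(Λ)(1 ⊗ Λ) = Λ ⊗ Λ, Λ ≠ 0), and let Λ̃ ∈ H be nonzero with Δ(Λ̃)(1 ⊗ Λ̃) = Λ ⊗ Λ̃. Then the set A_Λ̃ = {a ∈ H : Δ(a)(1 ⊗ Λ̃) = b ⊗ Λ̃ for some b ∈ H} is a left coideal subalgebra of H (a unital subalgebra with Δ(A_Λ̃) ⊂ H ⊗ A_Λ̃), and the assignment π : a ↦ b is a well-defined injective algebra homomorphism satisfying Δ(π(a)) = (id ⊗ π)(Δ(a)). -/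
open scoped TensorProduct
open TensorProduct LinearMap

section Aux

variable {k H : Type*} [Field k] [Ring H] [HopfAlgebra k H]

local notation "δ" => (Coalgebra.comul (R := k) (A := H))
local notation "S" => (HopfAlgebra.antipode (R := k) (A := H))

/-- multiplication by `1 ⊗ y` on the right is `lTensor` of right multiplication. -/
lemma aux_mul_one_tmul (t : H ⊗[k] H) (y : H) :
    t * ((1 : H) ⊗ₜ[k] y) = (LinearMap.mulRight k y).lTensor H t := by
  induction t using TensorProduct.induction_on with
  | zero => simp
  | tmul a b => simp [Algebra.TensorProduct.tmul_mul_tmul]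
  | add s t hs ht => rw [add_mul, hs, ht, map_add]

noncomputable def auxV : H ⊗[k] H →ₗ[k] H ⊗[k] H :=
  (LinearMap.mul' k H).lTensor H ∘ₗ (TensorProduct.assoc k H H H).toLinearMap ∘ₗ
    (((HopfAlgebra.antipode (R := k) (A := H)).lTensor H ∘ₗ Coalgebra.comul).rTensor H)

lemma auxV_comul (x : H) : auxV (δ x) = x ⊗ₜ[k] 1 := by
  have hnat : (TensorProduct.assoc k H H H).toLinearMap ∘ₗ (((S).lTensor H).rTensor H)
      = (((S).rTensor H).lTensor H) ∘ₗ (TensorProduct.assoc k H H H).toLinearMap :=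
    TensorProduct.ext_threefold fun a b c => by simp
  have h1 : auxV (δ x)
      = (LinearMap.mul' k H).lTensor H
        ((TensorProduct.assoc k H H H) (((S).lTensor H).rTensor H ((δ).rTensor H (δ x)))) := by
    simp [auxV, LinearMap.rTensor_comp, LinearMap.comp_apply]
  rw [h1, show (TensorProduct.assoc k H H H) (((S).lTensor H).rTensor H ((δ).rTensor H (δ x)))
      = ((S).rTensor H).lTensor H ((TensorProduct.assoc k H H H) ((δ).rTensor H (δ x))) from
      LinearMap.congr_fun hnat _]
  rw [show (TensorProduct.assoc k H H H) ((δ).rTensor H (δ x)) = (δ).lTensor H (δ x) from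
      Coalgebra.coassoc_apply x]
  rw [← LinearMap.lTensor_comp_apply, ← LinearMap.lTensor_comp_apply, LinearMap.comp_assoc]
  rw [show (LinearMap.mul' k H) ∘ₗ ((S).rTensor H) ∘ₗ (δ)
      = (Algebra.linearMap k H) ∘ₗ Coalgebra.counit from HopfAlgebra.mul_antipode_rTensor_comul]
  rw [LinearMap.lTensor_comp_apply]
  rw [show (Coalgebra.counit (R := k) (A := H)).lTensor H (δ x) = x ⊗ₜ[k] (1 : k) from
      Coalgebra.lTensor_counit_comul x]
  simp

set_option synthInstance.maxHeartbeats 800000 in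
lemma auxV_mulRight (y : H) (t : H ⊗[k] H) :
    auxV ((LinearMap.mulRight k y).lTensor H t) = (LinearMap.mulRight k y).lTensor H (auxV t) := by
  have hmaps : auxV ∘ₗ (LinearMap.mulRight k y).lTensor H
      = ((LinearMap.mulRight k y).lTensor H) ∘ₗ (auxV (k := k) (H := H)) := by
    refine TensorProduct.ext' fun u v => ?_
    simp only [LinearMap.comp_apply, LinearMap.lTensor_tmul, LinearMap.mulRight_apply]
    simp only [auxV, LinearMap.comp_apply, LinearMap.rTensor_tmul]
    generalize (S).lTensor H (δ u) = w
    induction w using TensorProduct.induction_on with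
    | zero => rw [TensorProduct.zero_tmul, TensorProduct.zero_tmul]; simp
    | tmul p q => simp [mul_assoc]
    | add s t hs ht =>
        simp only [add_tmul, map_add] at *
        rw [hs, ht]
  exact LinearMap.congr_fun hmaps t

lemma auxV_key (x y : H) : auxV (δ x * ((1 : H) ⊗ₜ[k] y)) = x ⊗ₜ[k] y := by
  rw [aux_mul_one_tmul, auxV_mulRight, auxV_comul]
  simp

lemma aux_tmul_inj {y : H} (hy : y ≠ 0) {x x' : H} (h : x ⊗ₜ[k] y = x' ⊗ₜ[k] y) : x = x' := by
  let g : k →ₗ[k] H := LinearMap.toSpanSingleton k H y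
  have hginj : Function.Injective g := by
    intro c c' hcc
    simp only [g, LinearMap.toSpanSingleton_apply] at hcc
    have h0 : (c - c') • y = 0 := by rw [sub_smul, hcc, sub_self]
    rcases smul_eq_zero.mp h0 with h1 | h1
    · exact sub_eq_zero.mp h1
    · exact absurd h1 hy
  have hinj := Module.Flat.lTensor_preserves_injective_linearMap (M := H) g hginj
  have hx : g.lTensor H (x ⊗ₜ[k] (1 : k)) = g.lTensor H (x' ⊗ₜ[k] (1 : k)) := by
    simpa [g, LinearMap.toSpanSingleton_apply] using h
  have h2 := hinj hx
  have h3 := congrArg (TensorProduct.rid k H) h2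
  simpa using h3

end Aux

set_option synthInstance.maxHeartbeats 800000 in
/-- Given an integral-type element `Λ` and a `Λ`-integral-type element `Λt` in a
Hopf algebra `H`, the set `A = {a : Δ(a)(1 ⊗ Λt) = b ⊗ Λt for some b}` is a left
coideal subalgebra of `H`, and `π : a ↦ b` is a well-defined injective algebra
homomorphism satisfying `Δ(π(a)) = (id ⊗ π)(Δ(a))`. -/
theorem integral_type_coideal_subalgebra
    (k H : Type*) [Field k] [Ring H] [HopfAlgebra k H]
    (hS : Function.Bijective (HopfAlgebra.antipode (R := k) (A := H)))
    (Λ Λt : H) (hΛ : Λ ≠ 0) (hΛt : Λt ≠ 0)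
    (hint : Coalgebra.comul (R := k) Λ * ((1 : H) ⊗ₜ[k] Λ) = Λ ⊗ₜ[k] Λ)
    (hΛint : Coalgebra.comul (R := k) Λt * ((1 : H) ⊗ₜ[k] Λt) = Λ ⊗ₜ[k] Λt)
    (A : Set H)
    (hA : A = {a : H | ∃ b : H,
      Coalgebra.comul (R := k) a * ((1 : H) ⊗ₜ[k] Λt) = b ⊗ₜ[k] Λt}) :
    (1 : H) ∈ A ∧
    (∀ a ∈ A, ∀ a' ∈ A, a * a' ∈ A) ∧
    (∀ a ∈ A, ∀ a' ∈ A, a + a' ∈ A) ∧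
    (∀ (c : k), ∀ a ∈ A, c • a ∈ A) ∧
    (∀ a ∈ A, Coalgebra.comul (R := k) a ∈
      Submodule.span k {t : H ⊗[k] H | ∃ x y : H, y ∈ A ∧ t = x ⊗ₜ[k] y}) ∧
    ∃ π : H →ₗ[k] H,
      (∀ a ∈ A, Coalgebra.comul (R := k) a * ((1 : H) ⊗ₜ[k] Λt) = π a ⊗ₜ[k] Λt) ∧
      Set.InjOn π A ∧
      (∀ a ∈ A, ∀ a' ∈ A, π (a * a') = π a * π a') ∧
      (∀ a ∈ A, Coalgebra.comul (R := k) (π a) =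
        TensorProduct.map LinearMap.id π (Coalgebra.comul (R := k) a)) := by
  -- the linear map `x ↦ x ⊗ Λt`
  set ι : H →ₗ[k] H ⊗[k] H := (TensorProduct.mk k H H).flip Λt with hιdef
  have hι_apply : ∀ x : H, ι x = x ⊗ₜ[k] Λt := fun x => rfl
  have hι : Function.Injective ι := fun x x' h =>
    aux_tmul_inj hΛt (by rwa [hι_apply, hι_apply] at h)
  -- the linear map `a ↦ Δ(a)(1 ⊗ Λt)`
  set φ : H →ₗ[k] H ⊗[k] H := (LinearMap.mulRight k Λt).lTensor H ∘ₗ Coalgebra.comul with hφdef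
  have hφ_apply : ∀ a : H, φ a = Coalgebra.comul (R := k) a * ((1 : H) ⊗ₜ[k] Λt) := by
    intro a
    rw [hφdef, LinearMap.comp_apply]
    exact (aux_mul_one_tmul _ _).symm
  have hAmem : ∀ a : H, a ∈ A ↔ φ a ∈ LinearMap.range ι := by
    intro a
    rw [hA]
    constructor
    · rintro ⟨b, hb⟩
      exact ⟨b, by rw [hι_apply, hφ_apply, hb]⟩
    · rintro ⟨b, hb⟩
      exact ⟨b, by rw [← hφ_apply, ← hι_apply, hb]⟩
  -- construction of π
  obtain ⟨q, hq⟩ := Submodule.exists_isCompl (LinearMap.range ι)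
  set p := (LinearMap.range ι).linearProjOfIsCompl q hq with hpdef
  set e := LinearEquiv.ofInjective ι hι with hedef
  set π : H →ₗ[k] H := e.symm.toLinearMap ∘ₗ (p ∘ₗ φ) with hπdef
  have hπ_eq : ∀ a : H, φ a ∈ LinearMap.range ι → ι (π a) = φ a := by
    intro a ha
    have h1 : p (φ a) = ⟨φ a, ha⟩ :=
      Submodule.linearProjOfIsCompl_apply_left hq ⟨φ a, ha⟩
    have h2 : π a = e.symm ⟨φ a, ha⟩ := by
      rw [hπdef]
      simp only [LinearMap.comp_apply, LinearEquiv.coe_coe, h1]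
    rw [h2]
    calc ι (e.symm ⟨φ a, ha⟩)
        = ((e (e.symm ⟨φ a, ha⟩) : LinearMap.range ι) : H ⊗[k] H) :=
          (LinearEquiv.ofInjective_apply ι _).symm
      _ = φ a := by rw [e.apply_symm_apply]
  have hπ_main : ∀ a ∈ A,
      Coalgebra.comul (R := k) a * ((1 : H) ⊗ₜ[k] Λt) = π a ⊗ₜ[k] Λt := by
    intro a ha
    rw [← hφ_apply, ← hι_apply]
    exact (hπ_eq a ((hAmem a).mp ha)).symm
  -- closure under multiplication, with the multiplicativity of π
  have hmul : ∀ a ∈ A, ∀ a' ∈ A,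
      Coalgebra.comul (R := k) (a * a') * ((1 : H) ⊗ₜ[k] Λt) = (π a * π a') ⊗ₜ[k] Λt := by
    intro a ha a' ha'
    calc Coalgebra.comul (R := k) (a * a') * ((1 : H) ⊗ₜ[k] Λt)
        = Coalgebra.comul (R := k) a *
            (Coalgebra.comul (R := k) a' * ((1 : H) ⊗ₜ[k] Λt)) := by
          rw [Bialgebra.comul_mul, mul_assoc]
      _ = Coalgebra.comul (R := k) a *
            (((1 : H) ⊗ₜ[k] Λt) * (π a' ⊗ₜ[k] (1 : H))) := by
          rw [hπ_main a' ha', Algebra.TensorProduct.tmul_mul_tmul, one_mul, mul_one]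
      _ = (π a ⊗ₜ[k] Λt) * (π a' ⊗ₜ[k] (1 : H)) := by
          rw [← mul_assoc, hπ_main a ha]
      _ = (π a * π a') ⊗ₜ[k] Λt := by
          rw [Algebra.TensorProduct.tmul_mul_tmul, mul_one]
  have hmulA : ∀ a ∈ A, ∀ a' ∈ A, a * a' ∈ A := by
    intro a ha a' ha'
    rw [hA]
    exact ⟨π a * π a', hmul a ha a' ha'⟩
  -- the quotient map detecting membership in A
  set ψ : H →ₗ[k] (H ⊗[k] H) ⧸ (LinearMap.range ι) := (LinearMap.range ι).mkQ ∘ₗ φ with hψdef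
  have hker : ∀ a : H, ψ a = 0 ↔ φ a ∈ LinearMap.range ι := by
    intro a
    rw [hψdef, LinearMap.comp_apply, Submodule.mkQ_apply, Submodule.Quotient.mk_eq_zero]
  have hexact0 : Function.Exact (LinearMap.ker ψ).subtype ψ :=
    LinearMap.exact_subtype_ker_map ψ
  have hexact := Module.Flat.lTensor_exact H hexact0
  -- naturality lemmas
  have hnat2 : ((LinearMap.mulRight k Λt).lTensor H).lTensor H ∘ₗ
        (TensorProduct.assoc k H H H).toLinearMap
      = (TensorProduct.assoc k H H H).toLinearMap ∘ₗ
        (LinearMap.mulRight k Λt).lTensor (H ⊗[k] H) :=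
    TensorProduct.ext_threefold fun a b c => by simp
  have hnat3 : (LinearMap.mulRight k Λt).lTensor (H ⊗[k] H) ∘ₗ
        (Coalgebra.comul (R := k) (A := H)).rTensor H
      = (Coalgebra.comul (R := k) (A := H)).rTensor H ∘ₗ
        (LinearMap.mulRight k Λt).lTensor H :=
    TensorProduct.ext' fun a b => by simp
  have hassoc_ι : ∀ t : H ⊗[k] H,
      (TensorProduct.assoc k H H H) (t ⊗ₜ[k] Λt) = ι.lTensor H t := by
    intro t
    induction t using TensorProduct.induction_on with
    | zero => rw [TensorProduct.zero_tmul]; simp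
    | tmul a b => simp [hι_apply]
    | add s t hs ht => rw [TensorProduct.add_tmul, map_add, map_add, hs, ht]
  -- the key computation
  have KC : ∀ a : H, φ a ∈ LinearMap.range ι →
      φ.lTensor H (Coalgebra.comul (R := k) a)
        = ι.lTensor H (Coalgebra.comul (R := k) (π a)) := by
    intro a ha
    have step1 : φ.lTensor H (Coalgebra.comul (R := k) a)
        = ((LinearMap.mulRight k Λt).lTensor H).lTensor H
            ((Coalgebra.comul (R := k) (A := H)).lTensor H (Coalgebra.comul a)) := by
      rw [hφdef, LinearMap.lTensor_comp, LinearMap.comp_apply]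
    rw [step1, ← Coalgebra.coassoc_apply]
    rw [show ((LinearMap.mulRight k Λt).lTensor H).lTensor H
          ((TensorProduct.assoc k H H H)
            ((Coalgebra.comul (R := k) (A := H)).rTensor H (Coalgebra.comul a)))
        = (TensorProduct.assoc k H H H)
            ((LinearMap.mulRight k Λt).lTensor (H ⊗[k] H)
              ((Coalgebra.comul (R := k) (A := H)).rTensor H (Coalgebra.comul a)))
      from LinearMap.congr_fun hnat2 _]
    rw [show (LinearMap.mulRight k Λt).lTensor (H ⊗[k] H)
          ((Coalgebra.comul (R := k) (A := H)).rTensor H (Coalgebra.comul a))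
        = (Coalgebra.comul (R := k) (A := H)).rTensor H
            ((LinearMap.mulRight k Λt).lTensor H (Coalgebra.comul a))
      from LinearMap.congr_fun hnat3 _]
    have hφa : (LinearMap.mulRight k Λt).lTensor H (Coalgebra.comul a) = φ a := by
      rw [hφdef]; rfl
    rw [hφa, ← hπ_eq a ha, hι_apply, LinearMap.rTensor_tmul, hassoc_ι]
  -- membership of comul a in the range of H ⊗ (ker ψ)
  have hrange : ∀ a ∈ A, Coalgebra.comul (R := k) a ∈
      Set.range ((LinearMap.ker ψ).subtype.lTensor H) := by
    intro a ha
    apply (hexact (Coalgebra.comul a)).mp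
    have hz : ((LinearMap.range ι).mkQ ∘ₗ ι) = 0 := by
      ext x
      simp [Submodule.Quotient.mk_eq_zero]
    rw [hψdef, LinearMap.lTensor_comp, LinearMap.comp_apply, KC a ((hAmem a).mp ha),
      ← LinearMap.lTensor_comp_apply, hz, LinearMap.lTensor_zero, LinearMap.zero_apply]
  have hkerA : ∀ y : H, y ∈ LinearMap.ker ψ → y ∈ A := by
    intro y hy
    rw [hAmem]
    exact (hker y).mp hy
  refine ⟨?_, hmulA, ?_, ?_, ?_, π, hπ_main, ?_, ?_, ?_⟩
  · rw [hA]
    exact ⟨1, by rw [Bialgebra.comul_one, one_mul]⟩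
  · rw [hA]
    rintro a ⟨b, hb⟩ a' ⟨b', hb'⟩
    exact ⟨b + b', by rw [map_add, add_mul, hb, hb', TensorProduct.add_tmul]⟩
  · rw [hA]
    rintro c a ⟨b, hb⟩
    exact ⟨c • b, by rw [map_smul, smul_mul_assoc, hb, TensorProduct.smul_tmul']⟩
  · intro a ha
    obtain ⟨s, hs⟩ := hrange a ha
    rw [← hs]
    clear hs
    induction s using TensorProduct.induction_on with
    | zero => simp only [map_zero]; exact Submodule.zero_mem _
    | tmul x y => exact Submodule.subset_span ⟨x, y.1, hkerA y.1 y.2, by simp⟩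
    | add s t hst htt =>
        rw [map_add]
        exact Submodule.add_mem _ hst htt
  · -- injectivity
    intro a ha a' ha' hpi
    have h1 : φ a = φ a' := by
      rw [← hπ_eq a ((hAmem a).mp ha), ← hπ_eq a' ((hAmem a').mp ha'), hpi]
    have h2 : a ⊗ₜ[k] Λt = a' ⊗ₜ[k] Λt := by
      rw [← auxV_key a Λt, ← auxV_key a' Λt, ← hφ_apply, ← hφ_apply, h1]
    exact aux_tmul_inj hΛt h2
  · -- multiplicativity
    intro a ha a' ha'
    apply hι
    rw [hι_apply, hι_apply, ← hπ_main (a * a') (hmulA a ha a' ha'), hmul a ha a' ha']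
  · -- comul ∘ π = (id ⊗ π) ∘ comul on A
    intro a ha
    obtain ⟨s, hs⟩ := hrange a ha
    have h1 : TensorProduct.map LinearMap.id π (Coalgebra.comul (R := k) a)
        = π.lTensor H (Coalgebra.comul (R := k) a) := rfl
    have hcomp : (ι ∘ₗ π) ∘ₗ (LinearMap.ker ψ).subtype = φ ∘ₗ (LinearMap.ker ψ).subtype := by
      ext y
      simp only [LinearMap.comp_apply, Submodule.coe_subtype]
      exact hπ_eq y.1 ((hker y.1).mp y.2)
    have h2 : ι.lTensor H (π.lTensor H (Coalgebra.comul (R := k) a))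
        = ι.lTensor H (Coalgebra.comul (R := k) (π a)) := by
      rw [← LinearMap.lTensor_comp_apply, ← hs, ← LinearMap.lTensor_comp_apply, hcomp,
        LinearMap.lTensor_comp_apply, hs, KC a ((hAmem a).mp ha)]
    have hinjT := Module.Flat.lTensor_preserves_injective_linearMap (M := H) ι hι
    rw [h1]
    exact (hinjT h2).symm
end

section
/- Let H be a Hopf algebra with invertible antipode, A ⊂ H a left coideal subalgebra, and μ : A → k a nonzero multiplicative functional. If the space of left μ-integrals L_μ = {Λ ∈ A : aΛ = μ(a)Λ for all a ∈ A} is nonzero, or the space of right μ-integrals R_μ is nonzero, then A is finite-dimensional. -/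
open scoped TensorProduct

/-!
For `x ∈ A` put `φ x = x₍₁₎ f(x₍₂₎)`, where `f` is any linear extension of `μ` to `H`; on `A`
this does not depend on `f` because `Δ A ⊆ H ⊗ A`. A left integral `Λ` gives
`Δx (1 ⊗ Λ) = φ x ⊗ Λ`. Transporting this identity along `a ⊗ b ↦ (S a ⊗ 1) Δb` yields
`(1 ⊗ x) ΔΛ = (S (φ x) ⊗ 1) ΔΛ`, so left multiplication by `A` preserves the finite-dimensional
span of the right legs `(ξ ⊗ id) ΔΛ`. Transporting it back along `a ⊗ b ↦ Δb (S⁻¹ a ⊗ 1)` shows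
that `φ x ⊗ Λ` is determined by `(1 ⊗ x) ΔΛ`. Applying `id ⊗ ε` to the first identity gives
`ker φ ⊆ ker ε`, and since `Δ (φ x) = x₍₁₎ ⊗ φ x₍₂₎` this makes `φ` injective; hence `A` acts
faithfully on the span of the right legs. Right integrals are handled by the mirror-image argument.
-/

open TensorProduct LinearMap

section Semiring

variable {R U V W : Type*} [CommSemiring R] [AddCommMonoid U] [Module R U] [AddCommMonoid V]
  [Module R V] [AddCommMonoid W] [Module R W]

theorem TensorProduct.lid_rTensor_lTensor (ξ : Module.Dual R V) (f : W →ₗ[R] U)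
    (w : V ⊗[R] W) :
    TensorProduct.lid R U (ξ.rTensor U (f.lTensor V w)) =
      f (TensorProduct.lid R W (ξ.rTensor W w)) := by
  induction w using TensorProduct.induction_on with
  | zero => simp
  | tmul v x => simp
  | add w₁ w₂ h₁ h₂ => simp [h₁, h₂]

theorem TensorProduct.eq_zero_of_forall_dual_rTensor [Module.Free R V] {w : V ⊗[R] W}
    (h : ∀ ξ : Module.Dual R V, TensorProduct.lid R W (ξ.rTensor W w) = 0) : w = 0 := by
  classical
  apply (equivFinsuppOfBasisLeft (Module.Free.chooseBasis R V)).injective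
  ext i
  simp [equivFinsuppOfBasisLeft_apply, h]

def TensorProduct.rightLegSpan (w : V ⊗[R] W) : Submodule R W :=
  Submodule.span R (Set.range fun ξ : Module.Dual R V => TensorProduct.lid R W (ξ.rTensor W w))

theorem TensorProduct.map_mem_rightLegSpan {w : V ⊗[R] W} {f : W →ₗ[R] W} {g : V →ₗ[R] V}
    (h : f.lTensor V w = g.rTensor W w) {c : W} (hc : c ∈ rightLegSpan w) :
    f c ∈ rightLegSpan w := by
  induction hc using Submodule.span_induction with
  | mem c hc =>
    obtain ⟨ξ, rfl⟩ := hc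
    rw [← lid_rTensor_lTensor, h, ← LinearMap.comp_apply (ξ.rTensor W), ← rTensor_comp]
    exact Submodule.subset_span ⟨ξ ∘ₗ g, rfl⟩
  | zero => simp
  | add x y _ _ hx hy => simpa using add_mem hx hy
  | smul a x _ hx => simpa using Submodule.smul_mem _ a hx

theorem TensorProduct.lTensor_eq_zero_of_forall_mem_rightLegSpan [Module.Free R V]
    {w : V ⊗[R] W} {f : W →ₗ[R] U} (h : ∀ c ∈ rightLegSpan w, f c = 0) : f.lTensor V w = 0 :=
  eq_zero_of_forall_dual_rTensor fun ξ => by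
    rw [lid_rTensor_lTensor]
    exact h _ (Submodule.subset_span ⟨ξ, rfl⟩)

end Semiring

section Field

variable {K M U V W : Type*} [Field K] [AddCommGroup M] [Module K M] [AddCommGroup U]
  [Module K U] [AddCommGroup V] [Module K V] [AddCommGroup W] [Module K W]

theorem LinearMap.exists_comp_eq_of_ker_le (f : U →ₗ[K] V) (g : U →ₗ[K] W)
    (h : ker f ≤ ker g) : ∃ ν : V →ₗ[K] W, ν ∘ₗ f = g := by
  obtain ⟨ν, hν⟩ :=
    LinearMap.exists_extend ((ker f).liftQ g h ∘ₗ f.quotKerEquivRange.symm.toLinearMap)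
  refine ⟨ν, LinearMap.ext fun u => ?_⟩
  simpa [quotKerEquivRange_symm_apply_image] using congr($hν ⟨f u, mem_range_self f u⟩)

theorem TensorProduct.eq_zero_of_tmul_eq_zero_of_ne_zero {a : W} {b : V}
    (h : a ⊗ₜ[K] b = 0) (hb : b ≠ 0) : a = 0 := by
  obtain ⟨ξ, hξ⟩ : ∃ ξ : Module.Dual K V, ξ b ≠ 0 := by
    by_contra! hξ
    exact hb ((Module.forall_dual_apply_eq_zero_iff K b).mp hξ)
  have := congr(TensorProduct.rid K W (ξ.lTensor W $h))
  simp only [lTensor_tmul, rid_tmul, map_zero] at this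
  exact (smul_eq_zero.mp this).resolve_left hξ

theorem TensorProduct.finiteDimensional_rightLegSpan (w : V ⊗[K] W) :
    FiniteDimensional K (rightLegSpan w) := by
  classical
  obtain ⟨s, rfl⟩ := TensorProduct.exists_finset w
  have := FiniteDimensional.span_of_finite K (s.finite_toSet.image Prod.snd)
  refine Submodule.finiteDimensional_of_le (S₂ := Submodule.span K (Prod.snd '' (s : Set (V × W))))
    (Submodule.span_le.mpr ?_)
  rintro _ ⟨ξ, rfl⟩
  simp only [map_sum, rTensor_tmul, lid_tmul]
  exact Submodule.sum_mem _ fun p hp =>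
    Submodule.smul_mem _ _ (Submodule.subset_span ⟨p, hp, rfl⟩)

theorem finiteDimensional_of_lTensor_eq_rTensor (w : V ⊗[K] W) (π : M →ₗ[K] Module.End K W)
    (habs : ∀ x, ∃ g : Module.End K V, (π x).lTensor V w = g.rTensor W w)
    (hinj : ∀ x, (π x).lTensor V w = 0 → x = 0) : FiniteDimensional K M := by
  have := finiteDimensional_rightLegSpan w
  let ρ : M →ₗ[K] Module.End K (rightLegSpan w) :=
    { toFun x := (π x).restrict fun c hc => map_mem_rightLegSpan (habs x).choose_spec hc
      map_add' x y := by ext; simp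
      map_smul' a x := by ext; simp }
  refine Module.Finite.of_injective ρ (injective_iff_map_eq_zero ρ |>.mpr fun x hx => hinj x ?_)
  refine lTensor_eq_zero_of_forall_mem_rightLegSpan fun c hc => ?_
  simpa [ρ] using congr(Subtype.val ($hx ⟨c, hc⟩))

end Field

section Coalgebra

open Coalgebra (comul counit coassoc_apply)

section Semiring

variable {R C : Type*} [CommSemiring R] [AddCommMonoid C] [Module R C] [Coalgebra R C]

def Coalgebra.rightContract (f : C →ₗ[R] R) : C →ₗ[R] C :=
  (_root_.TensorProduct.rid R C).toLinearMap ∘ₗ f.lTensor C ∘ₗ comul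

theorem Coalgebra.comul_rightContract (f : C →ₗ[R] R) (c : C) :
    comul (rightContract f c) = (rightContract f).lTensor C (comul c) := by
  have hcomul (u : C ⊗[R] C) : comul (_root_.TensorProduct.rid R C (f.lTensor C u)) =
      _root_.TensorProduct.rid R (C ⊗[R] C) (f.lTensor (C ⊗[R] C) (comul.rTensor C u)) := by
    induction u using TensorProduct.induction_on with
    | zero => simp
    | tmul x y => simp
    | add u₁ u₂ h₁ h₂ => simp only [map_add, h₁, h₂]
  have hassoc (t : (C ⊗[R] C) ⊗[R] C) :
      _root_.TensorProduct.rid R (C ⊗[R] C) (f.lTensor (C ⊗[R] C) t) =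
        ((_root_.TensorProduct.rid R C).toLinearMap ∘ₗ f.lTensor C).lTensor C
          (_root_.TensorProduct.assoc R C C C t) := by
    induction t using TensorProduct.induction_on with
    | zero => simp
    | tmul u z =>
      induction u using TensorProduct.induction_on with
      | zero => simp
      | tmul x y => simp
      | add u₁ u₂ h₁ h₂ => simp only [TensorProduct.add_tmul, map_add, h₁, h₂]
    | add t₁ t₂ h₁ h₂ => simp only [map_add, h₁, h₂]
  rw [rightContract, comp_apply, comp_apply, LinearEquiv.coe_coe, hcomul, hassoc, coassoc_apply,
    ← comp_apply (lTensor C _), ← lTensor_comp, comp_assoc]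

end Semiring

variable {K C M : Type*} [Field K] [AddCommGroup C] [Module K C] [Coalgebra K C]
  [AddCommGroup M] [Module K M]

theorem Coalgebra.eq_zero_of_rightContract_eq_zero (ι : M →ₗ[K] C)
    (hι : ∀ m, comul (ι m) ∈ range (ι.lTensor C)) (f : C →ₗ[K] K)
    (hker : ∀ m, rightContract f (ι m) = 0 → counit (R := K) (ι m) = 0) {m : M}
    (hm : rightContract f (ι m) = 0) : ι m = 0 := by
  obtain ⟨ν, hν⟩ :=
    exists_comp_eq_of_ker_le (rightContract f ∘ₗ ι) (counit ∘ₗ ι) fun m hm => hker m hm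
  obtain ⟨t, ht⟩ := hι m
  calc ι m = _root_.TensorProduct.rid K C (counit.lTensor C (comul (ι m))) := by simp
    _ = _root_.TensorProduct.rid K C ((ν ∘ₗ rightContract f ∘ₗ ι).lTensor C t) := by
      rw [← ht, ← comp_apply (counit.lTensor C), ← lTensor_comp, ← hν]
    _ = _root_.TensorProduct.rid K C (ν.lTensor C (comul (rightContract f (ι m)))) := by
      rw [comul_rightContract, ← ht, lTensor_comp, lTensor_comp, comp_apply, comp_apply]
    _ = 0 := by simp [hm]

theorem Coalgebra.finiteDimensional_of_lTensor_comul_eq_rTensor {ι : M →ₗ[K] C}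
    (hι : Function.Injective ι) (hcoid : ∀ m, comul (ι m) ∈ range (ι.lTensor C))
    (f : C →ₗ[K] K) {Λ : C} (hΛ : Λ ≠ 0) (π : M →ₗ[K] Module.End K C)
    (g : C →ₗ[K] Module.End K C) (hπ : ∀ m, counit ∘ₗ π m = counit (R := K) (ι m) • counit)
    (habs : ∀ m, (π m).lTensor C (comul Λ) = (g (rightContract f (ι m))).rTensor C (comul Λ))
    (hdet : ∀ m, (π m).lTensor C (comul Λ) = 0 → rightContract f (ι m) = 0) :
    FiniteDimensional K M := by
  have hker (m : M) (hm : rightContract f (ι m) = 0) : counit (R := K) (ι m) = 0 := by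
    have h0 : (π m).lTensor C (comul Λ) = 0 := by
      rw [habs, hm, map_zero, rTensor_zero, LinearMap.zero_apply]
    have := congr(_root_.TensorProduct.rid K C (counit.lTensor C $h0))
    rw [← comp_apply (counit.lTensor C), ← lTensor_comp, hπ, lTensor_smul, LinearMap.smul_apply,
      Coalgebra.lTensor_counit_comul] at this
    simpa [hΛ] using this
  exact finiteDimensional_of_lTensor_eq_rTensor (comul Λ) π (fun m => ⟨_, habs m⟩) fun m hm =>
    hι.eq_iff' (map_zero ι) |>.mp <| eq_zero_of_rightContract_eq_zero ι hcoid f hker (hdet m hm)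

end Coalgebra

section TensorMul

variable {R A B : Type*} [CommSemiring R] [Semiring A] [Semiring B] [Algebra R A] [Algebra R B]

theorem Algebra.TensorProduct.one_tmul_mul_eq_lTensor (b : B) (w : A ⊗[R] B) :
    (1 ⊗ₜ b) * w = (mulLeft R b).lTensor A w := by
  induction w using TensorProduct.induction_on with
  | zero => simp
  | tmul x y => simp
  | add w₁ w₂ h₁ h₂ => simp [mul_add, h₁, h₂]

theorem Algebra.TensorProduct.tmul_one_mul_eq_rTensor (a : A) (w : A ⊗[R] B) :
    (a ⊗ₜ 1) * w = (mulLeft R a).rTensor B w := by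
  induction w using TensorProduct.induction_on with
  | zero => simp
  | tmul x y => simp
  | add w₁ w₂ h₁ h₂ => simp [mul_add, h₁, h₂]

theorem Algebra.TensorProduct.mul_one_tmul_eq_lTensor (b : B) (w : A ⊗[R] B) :
    w * (1 ⊗ₜ b) = (mulRight R b).lTensor A w := by
  induction w using TensorProduct.induction_on with
  | zero => simp
  | tmul x y => simp
  | add w₁ w₂ h₁ h₂ => simp [add_mul, h₁, h₂]

theorem Algebra.TensorProduct.mul_tmul_one_eq_rTensor (a : A) (w : A ⊗[R] B) :
    w * (a ⊗ₜ 1) = (mulRight R a).rTensor B w := by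
  induction w using TensorProduct.induction_on with
  | zero => simp
  | tmul x y => simp
  | add w₁ w₂ h₁ h₂ => simp [add_mul, h₁, h₂]

end TensorMul

section Hopf

open Coalgebra (comul counit)
open HopfAlgebra (antipode)
open Algebra.TensorProduct (one_tmul_mul_eq_lTensor tmul_one_mul_eq_rTensor
  mul_one_tmul_eq_lTensor mul_tmul_one_eq_rTensor)

variable {R H : Type*} [CommSemiring R] [Semiring H]

section Bialgebra

variable [Bialgebra R H]

theorem Bialgebra.counit_comp_mulLeft (x : H) :
    counit ∘ₗ mulLeft R x = counit (R := R) x • counit := by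
  ext y
  simp [Bialgebra.counit_mul]

theorem Bialgebra.counit_comp_mulRight (x : H) :
    counit ∘ₗ mulRight R x = counit (R := R) x • counit := by
  ext y
  simp [Bialgebra.counit_mul, mul_comm]

variable (R) in
/-- `a ⊗ b ↦ g (a ⊗ b₍₁₎) ⊗ b₍₂₎` -/
noncomputable def Bialgebra.contractComul (g : H ⊗[R] H →ₗ[R] H) : H ⊗[R] H →ₗ[R] H ⊗[R] H :=
  g.rTensor H ∘ₗ (_root_.TensorProduct.assoc R H H H).symm.toLinearMap ∘ₗ comul.lTensor H

theorem Bialgebra.contractComul_tmul (g : H ⊗[R] H →ₗ[R] H) (a b : H) :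
    contractComul R g (a ⊗ₜ b) = (g ∘ₗ TensorProduct.mk R H H a).rTensor H (comul b) := by
  rw [contractComul, comp_apply, comp_apply, lTensor_tmul]
  induction comul (R := R) b using TensorProduct.induction_on with
  | zero => simp
  | tmul x y => simp
  | add t₁ t₂ h₁ h₂ => simp only [tmul_add, map_add, h₁, h₂]

theorem Bialgebra.contractComul_comul {g : H ⊗[R] H →ₗ[R] H}
    (hg : g ∘ₗ comul = Algebra.linearMap R H ∘ₗ counit) (x : H) :
    contractComul R g (comul x) = 1 ⊗ₜ x := by
  rw [contractComul, comp_apply, comp_apply, LinearEquiv.coe_coe, Coalgebra.coassoc_symm_apply,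
    ← comp_apply (g.rTensor H), ← rTensor_comp, hg, rTensor_comp, comp_apply,
    Coalgebra.rTensor_counit_comul]
  simp

end Bialgebra

open Bialgebra (contractComul contractComul_tmul contractComul_comul)

variable [HopfAlgebra R H]

variable (R) in
noncomputable def HopfAlgebra.antipodeShift : H ⊗[R] H →ₗ[R] H ⊗[R] H :=
  contractComul R (mul' R H ∘ₗ (antipode R).rTensor H)

namespace HopfAlgebra

theorem antipodeShift_tmul (a b : H) :
    antipodeShift R (a ⊗ₜ b) = (antipode R a ⊗ₜ 1) * comul b := by
  rw [antipodeShift, contractComul_tmul, tmul_one_mul_eq_rTensor]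
  congr 2

theorem antipodeShift_comul (x : H) : antipodeShift R (comul x) = 1 ⊗ₜ x :=
  contractComul_comul mul_antipode_rTensor_comul x

theorem antipodeShift_mul_one_tmul (w : H ⊗[R] H) (b : H) :
    antipodeShift R (w * (1 ⊗ₜ b)) = antipodeShift R w * comul b := by
  induction w using TensorProduct.induction_on with
  | zero => simp
  | tmul x y => simp [antipodeShift_tmul, Bialgebra.comul_mul, mul_assoc]
  | add w₁ w₂ h₁ h₂ => simp only [add_mul, map_add, h₁, h₂]

theorem antipodeShift_comul_mul_one_tmul (x b : H) :
    antipodeShift R (comul x * (1 ⊗ₜ b)) = (1 ⊗ₜ x) * comul b := by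
  rw [antipodeShift_mul_one_tmul, antipodeShift_comul]

variable (hS : Function.Bijective (antipode R (A := H)))

noncomputable def antipodeInv : H →ₗ[R] H := (LinearEquiv.ofBijective (antipode R) hS).symm

@[simp]
theorem antipode_antipodeInv (x : H) : antipode R (antipodeInv hS x) = x :=
  (LinearEquiv.ofBijective (antipode R) hS).apply_symm_apply x

theorem mul_antipodeInv_lTensor_comm_comul :
    mul' R H ∘ₗ (antipodeInv hS).lTensor H ∘ₗ (TensorProduct.comm R H H).toLinearMap ∘ₗ comul =
      Algebra.linearMap R H ∘ₗ counit := by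
  have h : antipode R ∘ₗ mul' R H ∘ₗ (antipodeInv hS).lTensor H ∘ₗ
      (TensorProduct.comm R H H).toLinearMap = mul' R H ∘ₗ (antipode R).lTensor H := by
    ext a b
    simp [antipode_mul_antidistrib]
  ext x
  apply hS.injective
  have := congr($h (comul x))
  simp only [comp_apply] at this ⊢
  rw [this, mul_antipode_lTensor_comul_apply]
  simp [Algebra.algebraMap_eq_smul_one]

variable (R) in
noncomputable def antipodeInvShift : H ⊗[R] H →ₗ[R] H ⊗[R] H :=
  contractComul R (mul' R H ∘ₗ (antipodeInv hS).lTensor H ∘ₗ (TensorProduct.comm R H H).toLinearMap)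

theorem antipodeInvShift_tmul (a b : H) :
    antipodeInvShift R hS (a ⊗ₜ b) = comul b * (antipodeInv hS a ⊗ₜ 1) := by
  rw [antipodeInvShift, contractComul_tmul, mul_tmul_one_eq_rTensor]
  congr 2

theorem antipodeInvShift_comul (x : H) : antipodeInvShift R hS (comul x) = 1 ⊗ₜ x :=
  contractComul_comul (mul_antipodeInv_lTensor_comm_comul hS) x

theorem antipodeInvShift_one_tmul_mul (b : H) (w : H ⊗[R] H) :
    antipodeInvShift R hS ((1 ⊗ₜ b) * w) = comul b * antipodeInvShift R hS w := by
  induction w using TensorProduct.induction_on with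
  | zero => simp
  | tmul x y => simp [antipodeInvShift_tmul, Bialgebra.comul_mul, mul_assoc]
  | add w₁ w₂ h₁ h₂ => simp only [mul_add, map_add, h₁, h₂]

theorem antipodeInvShift_one_tmul_mul_comul (x b : H) :
    antipodeInvShift R hS ((1 ⊗ₜ x) * comul b) = comul x * (1 ⊗ₜ b) := by
  rw [antipodeInvShift_one_tmul_mul, antipodeInvShift_comul]

end HopfAlgebra

end Hopf

section CoidealSubalgebra

open Coalgebra (comul rightContract)
open HopfAlgebra (antipode antipodeShift_tmul antipodeShift_comul_mul_one_tmul antipodeInv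
  antipodeInvShift_tmul antipodeInvShift_one_tmul_mul_comul)
open Algebra.TensorProduct (one_tmul_mul_eq_lTensor tmul_one_mul_eq_rTensor
  mul_one_tmul_eq_lTensor mul_tmul_one_eq_rTensor)

variable {K H : Type*} [Field K] [Ring H]

section Bialgebra

variable [Bialgebra K H] {A : Subalgebra K H} {μ : A →ₐ[K] K} {f : H →ₗ[K] K}

theorem comul_mul_one_tmul_of_mem_leftIntegrals (hf : ∀ a : A, f a = μ a) {Λ : A}
    (hΛ : Λ ∈ leftIntegrals K μ) {x : H} (hx : comul x ∈ range (A.val.toLinearMap.lTensor H)) :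
    comul (R := K) x * (1 ⊗ₜ (Λ : H)) = rightContract f x ⊗ₜ (Λ : H) := by
  have hΛH (a : A) : (a : H) * Λ = μ a • (Λ : H) := congr(Subtype.val $(hΛ a))
  obtain ⟨t, ht⟩ := hx
  rw [rightContract, comp_apply, comp_apply, ← ht]
  clear ht
  induction t using TensorProduct.induction_on with
  | zero => simp
  | tmul h a => simp [hf, hΛH, smul_tmul]
  | add t₁ t₂ h₁ h₂ => simp only [map_add, add_mul, add_tmul, h₁, h₂]

theorem one_tmul_mul_comul_of_mem_rightIntegrals (hf : ∀ a : A, f a = μ a) {Λ : A}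
    (hΛ : Λ ∈ rightIntegrals K μ) {x : H} (hx : comul x ∈ range (A.val.toLinearMap.lTensor H)) :
    (1 ⊗ₜ (Λ : H)) * comul (R := K) x = rightContract f x ⊗ₜ (Λ : H) := by
  have hΛH (a : A) : (Λ : H) * a = μ a • (Λ : H) := congr(Subtype.val $(hΛ a))
  obtain ⟨t, ht⟩ := hx
  rw [rightContract, comp_apply, comp_apply, ← ht]
  clear ht
  induction t using TensorProduct.induction_on with
  | zero => simp
  | tmul h a => simp [hf, hΛH, smul_tmul]
  | add t₁ t₂ h₁ h₂ => simp only [map_add, mul_add, add_tmul, h₁, h₂]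

end Bialgebra

variable [HopfAlgebra K H] {A : Subalgebra K H} {μ : A →ₐ[K] K}

theorem finiteDimensional_of_mem_leftIntegrals (hS : Function.Bijective (antipode K (A := H)))
    (hA : ∀ x : A, comul (x : H) ∈ range (A.val.toLinearMap.lTensor H)) {Λ : A}
    (hΛ : Λ ∈ leftIntegrals K μ) (hΛ0 : Λ ≠ 0) : FiniteDimensional K A := by
  obtain ⟨f, hf⟩ := LinearMap.exists_extend (p := Subalgebra.toSubmodule A) μ.toLinearMap
  have key (x : A) :=
    comul_mul_one_tmul_of_mem_leftIntegrals (f := f) (fun a => congr($hf a)) hΛ (hA x)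
  refine Coalgebra.finiteDimensional_of_lTensor_comul_eq_rTensor Subtype.val_injective hA f
    (Λ := Λ) (by simpa using hΛ0) (LinearMap.mul K H ∘ₗ A.val.toLinearMap)
    (LinearMap.mul K H ∘ₗ antipode K)
    (fun x => Bialgebra.counit_comp_mulLeft (x : H)) (fun x => ?_) (fun x hx => ?_)
  · change (mulLeft K (x : H)).lTensor H _ = (mulLeft K (antipode K _)).rTensor H _
    rw [← one_tmul_mul_eq_lTensor, ← tmul_one_mul_eq_rTensor, ← antipodeShift_comul_mul_one_tmul,
      key, antipodeShift_tmul]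
    rfl
  · change (mulLeft K (x : H)).lTensor H _ = 0 at hx
    have := antipodeInvShift_one_tmul_mul_comul hS (x : H) Λ
    rw [one_tmul_mul_eq_lTensor, hx, map_zero, key] at this
    exact TensorProduct.eq_zero_of_tmul_eq_zero_of_ne_zero this.symm (by simpa using hΛ0)

theorem finiteDimensional_of_mem_rightIntegrals (hS : Function.Bijective (antipode K (A := H)))
    (hA : ∀ x : A, comul (x : H) ∈ range (A.val.toLinearMap.lTensor H)) {Λ : A}
    (hΛ : Λ ∈ rightIntegrals K μ) (hΛ0 : Λ ≠ 0) : FiniteDimensional K A := by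
  obtain ⟨f, hf⟩ := LinearMap.exists_extend (p := Subalgebra.toSubmodule A) μ.toLinearMap
  have key (x : A) :=
    one_tmul_mul_comul_of_mem_rightIntegrals (f := f) (fun a => congr($hf a)) hΛ (hA x)
  refine Coalgebra.finiteDimensional_of_lTensor_comul_eq_rTensor Subtype.val_injective hA f
    (Λ := Λ) (by simpa using hΛ0) ((LinearMap.mul K H).flip ∘ₗ A.val.toLinearMap)
    ((LinearMap.mul K H).flip ∘ₗ antipodeInv hS)
    (fun x => Bialgebra.counit_comp_mulRight (x : H)) (fun x => ?_) (fun x hx => ?_)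
  · change (mulRight K (x : H)).lTensor H _ = (mulRight K (antipodeInv hS _)).rTensor H _
    rw [← mul_one_tmul_eq_lTensor, ← mul_tmul_one_eq_rTensor,
      ← antipodeInvShift_one_tmul_mul_comul, key, antipodeInvShift_tmul]
    rfl
  · change (mulRight K (x : H)).lTensor H _ = 0 at hx
    have := antipodeShift_comul_mul_one_tmul (R := K) (Λ : H) x
    rw [mul_one_tmul_eq_lTensor, hx, map_zero, key] at this
    exact TensorProduct.eq_zero_of_tmul_eq_zero_of_ne_zero this.symm (by simpa using hΛ0)

end CoidealSubalgebra

theorem finiteDimensional_of_integral_general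
    (k H : Type*) [Field k] [Ring H] [HopfAlgebra k H]
    (hS : Function.Bijective (HopfAlgebra.antipode (R := k) (A := H)))
    (A : Subalgebra k H)
    (hcoid : ∀ a ∈ A, Coalgebra.comul (R := k) a ∈
      Submodule.span k {t : H ⊗[k] H | ∃ x y : H, y ∈ A ∧ t = x ⊗ₜ[k] y})
    (μ : ↥A →ₐ[k] k)
    (h : (∃ Λ : ↥A, Λ ≠ 0 ∧ ∀ a : ↥A, a * Λ = μ a • Λ) ∨
         (∃ Λ : ↥A, Λ ≠ 0 ∧ ∀ a : ↥A, Λ * a = μ a • Λ)) :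
    FiniteDimensional k ↥A := by
  have hA (x : A) : Coalgebra.comul (x : H) ∈ range (A.val.toLinearMap.lTensor H) := by
    refine Submodule.span_le.mpr ?_ (hcoid x x.2)
    rintro _ ⟨a, b, hb, rfl⟩
    exact ⟨a ⊗ₜ ⟨b, hb⟩, rfl⟩
  obtain ⟨Λ, hΛ0, hΛ⟩ | ⟨Λ, hΛ0, hΛ⟩ := h
  · exact finiteDimensional_of_mem_leftIntegrals hS hA (μ := μ) hΛ hΛ0
  · exact finiteDimensional_of_mem_rightIntegrals hS hA (μ := μ) hΛ hΛ0

/-- A left coideal subalgebra of a Hopf algebra admitting a nonzero left or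
right `μ`-integral is finite-dimensional. -/
theorem finiteDimensional_of_integral
    (k H : Type*) [Field k] [Ring H] [HopfAlgebra k H]
    (hS : Function.Bijective (HopfAlgebra.antipode (R := k) (A := H)))
    (A : Subalgebra k H)
    (hcoid : ∀ a ∈ A, Coalgebra.comul (R := k) a ∈
      Submodule.span k {t : H ⊗[k] H | ∃ x y : H, y ∈ A ∧ t = x ⊗ₜ[k] y})
    (μ : ↥A →ₐ[k] k) (hμ : ∃ a, μ a ≠ 0)
    (h : (∃ Λ : ↥A, Λ ≠ 0 ∧ ∀ a : ↥A, a * Λ = μ a • Λ) ∨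
         (∃ Λ : ↥A, Λ ≠ 0 ∧ ∀ a : ↥A, Λ * a = μ a • Λ)) :
    FiniteDimensional k ↥A :=
  finiteDimensional_of_integral_general k H hS A hcoid μ h
end

section
/- Let C be a coalgebra over a field k, g ∈ C a group-like element, and Λ ∈ C. Let V_Λ = {(ν ⊗ id)(Δ(Λ)) : ν ∈ C'} be the smallest left coideal containing Λ and ΛV = {(id ⊗ ν)(Δ(Λ)) : ν ∈ C'} the smallest right coideal containing Λ. Then the space of g-cointegrals L^g = {φ ∈ V_Λ' : (id ⊗ φ)(Δ(a)) = φ(a)g for all a ∈ V_Λ} is one-dimensional if g ∈ ΛV, and zero otherwise. Moreover, a g-cointegral φ is nonzero if and only if φ(Λ) ≠ 0. -/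
open scoped TensorProduct

/-!
Lift `Δ Λ` to `T ∈ C ⊗ V_Λ` (every left slice `(ν ⊗ id) Δ Λ` lies in `V_Λ`) and put
`U φ = (id ⊗ φ) T`. Since `ν (U φ) = φ ((ν ⊗ id) T)`, the map `U` is the transpose of the
surjection `C' → V_Λ`, hence injective, and its image is `ΛV` because functionals on `V_Λ` extend
to `C`. A functional `φ` is a `g`-cointegral iff `U φ = φ(Λ) g`: one direction is the definition at
`a = Λ`; for the other, coassociativity shows that `((ν ⊗ id) ∘ Δ ⊗ id) T` lifts
`Δ ((ν ⊗ id) Δ Λ)`, and `(ν ⊗ id) Δ g = ν(g) g`. As `ε (U φ) = φ(Λ)` and `ε(g) = 1`, the map `U`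
identifies the cointegrals with `k g ∩ ΛV`, and a cointegral vanishes iff `φ(Λ) = 0`.
-/

lemma LinearMap.span_setOf_exists_eq_apply {R M N : Type*} [Semiring R] [AddCommMonoid M]
    [Module R M] [AddCommMonoid N] [Module R N] (f : M →ₗ[R] N) :
    Submodule.span R {n | ∃ m, n = f m} = LinearMap.range f := by
  have : {n | ∃ m, n = f m} = Set.range f := by ext; simp [eq_comm]
  rw [this, ← LinearMap.coe_range, Submodule.span_eq]

namespace TensorProduct

variable {R M N P : Type*} [CommSemiring R] [AddCommMonoid M] [Module R M]
  [AddCommMonoid N] [Module R N] [AddCommMonoid P] [Module R P]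

def sliceLeft (t : M ⊗[R] N) : Module.Dual R M →ₗ[R] N where
  toFun ν := TensorProduct.lid R N (ν.rTensor N t)
  map_add' ν ν' := by simp [LinearMap.rTensor_add]
  map_smul' c ν := by simp [LinearMap.rTensor_smul]

def sliceRight (t : M ⊗[R] N) : Module.Dual R N →ₗ[R] M where
  toFun φ := TensorProduct.rid R M (φ.lTensor M t)
  map_add' φ φ' := by simp [LinearMap.lTensor_add]
  map_smul' c φ := by simp [LinearMap.lTensor_smul]

lemma sliceLeft_apply (t : M ⊗[R] N) (ν : Module.Dual R M) :
    sliceLeft t ν = TensorProduct.lid R N (ν.rTensor N t) := rfl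

lemma sliceRight_apply (t : M ⊗[R] N) (φ : Module.Dual R N) :
    sliceRight t φ = TensorProduct.rid R M (φ.lTensor M t) := rfl

lemma apply_sliceRight (t : M ⊗[R] N) (ν : Module.Dual R M) (φ : Module.Dual R N) :
    ν (sliceRight t φ) = φ (sliceLeft t ν) := by
  induction t using TensorProduct.induction_on with
  | zero => simp [sliceLeft_apply, sliceRight_apply]
  | tmul m n => simp [sliceLeft_apply, sliceRight_apply, mul_comm]
  | add x y hx hy => simp_all [sliceLeft_apply, sliceRight_apply]

lemma sliceLeft_lTensor (f : N →ₗ[R] P) (t : M ⊗[R] N) (ν : Module.Dual R M) :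
    sliceLeft (f.lTensor M t) ν = f (sliceLeft t ν) := by
  induction t using TensorProduct.induction_on with
  | zero => simp [sliceLeft_apply]
  | tmul m n => simp [sliceLeft_apply]
  | add x y hx hy => simp_all [sliceLeft_apply]

lemma sliceRight_lTensor (f : N →ₗ[R] P) (t : M ⊗[R] N) (ψ : Module.Dual R P) :
    sliceRight (f.lTensor M t) ψ = sliceRight t (ψ ∘ₗ f) := by
  simp [sliceRight_apply, ← LinearMap.lTensor_comp_apply]

lemma sliceRight_rTensor (f : M →ₗ[R] P) (t : M ⊗[R] N) (φ : Module.Dual R N) :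
    sliceRight (f.rTensor N t) φ = f (sliceRight t φ) := by
  induction t using TensorProduct.induction_on with
  | zero => simp [sliceRight_apply]
  | tmul m n => simp [sliceRight_apply]
  | add x y hx hy => simp_all [sliceRight_apply]

lemma sliceRight_injective_of_surjective_sliceLeft {t : M ⊗[R] N}
    (ht : Function.Surjective (sliceLeft t)) : Function.Injective (sliceRight t) := by
  intro φ ψ h
  ext n
  obtain ⟨ν, rfl⟩ := ht n
  rw [← apply_sliceRight, ← apply_sliceRight, h]

section Field

variable {k M N : Type*} [Field k] [AddCommGroup M] [Module k M] [AddCommGroup N] [Module k N]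

lemma eq_zero_of_sliceLeft_eq_zero {t : M ⊗[k] N} (ht : sliceLeft t = 0) : t = 0 := by
  classical
  let b := Module.Basis.ofVectorSpace k M
  apply (equivFinsuppOfBasisLeft b).injective
  ext i
  simpa [equivFinsuppOfBasisLeft_apply, sliceLeft_apply] using LinearMap.congr_fun ht (b.coord i)

lemma mem_range_lTensor_subtype_of_range_sliceLeft_le {t : M ⊗[k] N} {W : Submodule k N}
    (ht : LinearMap.range (sliceLeft t) ≤ W) : t ∈ LinearMap.range (W.subtype.lTensor M) := by
  rw [← (lTensor_exact M (LinearMap.exact_subtype_mkQ W) W.mkQ_surjective).linearMap_ker_eq]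
  refine eq_zero_of_sliceLeft_eq_zero (LinearMap.ext fun ν => ?_)
  simpa [sliceLeft_lTensor, Submodule.Quotient.mk_eq_zero] using ht ⟨ν, rfl⟩

lemma range_sliceRight_lTensor_subtype {W : Submodule k N} (t : M ⊗[k] W) :
    LinearMap.range (sliceRight (W.subtype.lTensor M t)) = LinearMap.range (sliceRight t) := by
  ext x
  constructor
  · rintro ⟨ψ, rfl⟩
    exact ⟨ψ ∘ₗ W.subtype, (sliceRight_lTensor _ _ _).symm⟩
  · rintro ⟨φ, rfl⟩
    obtain ⟨ψ, rfl⟩ := LinearMap.exists_extend φ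
    exact ⟨ψ, sliceRight_lTensor _ _ _⟩

end Field

end TensorProduct

namespace Coalgebra

open _root_.TensorProduct

section Semiring

variable {R A : Type*} [CommSemiring R] [AddCommMonoid A] [Module R A] [Coalgebra R A]

/-- `x ↼ ν = ∑ ν(x₁) x₂`, the right action of the dual algebra on `A`. -/
noncomputable def rightHit (ν : Module.Dual R A) : A →ₗ[R] A :=
  (TensorProduct.lid R A).toLinearMap ∘ₗ ν.rTensor A ∘ₗ comul

lemma rightHit_apply (ν : Module.Dual R A) (x : A) : rightHit ν x = sliceLeft (comul x) ν := rfl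

lemma comul_comp_rightHit (ν : Module.Dual R A) :
    comul ∘ₗ rightHit ν = (rightHit ν).rTensor A ∘ₗ comul := by
  let slice₁ : A ⊗[R] A →ₗ[R] A := (TensorProduct.lid R A).toLinearMap ∘ₗ ν.rTensor A
  let slice₂ : A ⊗[R] (A ⊗[R] A) →ₗ[R] A ⊗[R] A :=
    (TensorProduct.lid R (A ⊗[R] A)).toLinearMap ∘ₗ ν.rTensor (A ⊗[R] A)
  have hnat : comul ∘ₗ slice₁ = slice₂ ∘ₗ comul.lTensor A := by
    ext; simp [slice₁, slice₂]
  have hassoc : slice₂ ∘ₗ (_root_.TensorProduct.assoc R A A A).toLinearMap = slice₁.rTensor A := by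
    ext; simp [slice₁, slice₂, TensorProduct.smul_tmul']
  calc comul ∘ₗ rightHit ν
      = (comul ∘ₗ slice₁) ∘ₗ comul := rfl
    _ = slice₂ ∘ₗ (comul.lTensor A ∘ₗ comul) := by rw [hnat]; rfl
    _ = (slice₂ ∘ₗ (_root_.TensorProduct.assoc R A A A).toLinearMap) ∘ₗ
          comul.rTensor A ∘ₗ comul := by rw [← coassoc]; rfl
    _ = (rightHit ν).rTensor A ∘ₗ comul := by
      rw [hassoc, ← LinearMap.comp_assoc, ← LinearMap.rTensor_comp]; rfl

lemma comul_rightHit (ν : Module.Dual R A) (x : A) :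
    comul (R := R) (rightHit ν x) = (rightHit ν).rTensor A (comul x) :=
  LinearMap.congr_fun (comul_comp_rightHit ν) x

lemma sliceLeft_comul_counit (x : A) : sliceLeft (comul (R := R) x) counit = x := by
  simp [sliceLeft_apply]

lemma _root_.IsGroupLikeElem.rightHit_eq_smul {g : A} (hg : IsGroupLikeElem R g)
    (ν : Module.Dual R A) : rightHit ν g = ν g • g := by
  simp [rightHit_apply, hg.comul_eq_tmul_self, sliceLeft_apply]

end Semiring

section Field

variable {k C : Type*} [Field k] [AddCommGroup C] [Module k C] [Coalgebra k C]

lemma isGroupLikeElem_of_comul_eq_tmul_self {g : C} (hg0 : g ≠ 0)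
    (hg : comul (R := k) g = g ⊗ₜ g) : IsGroupLikeElem k g := by
  refine ⟨?_, hg⟩
  have h : counit (R := k) g • g = g := by
    simpa [hg, sliceLeft_apply] using sliceLeft_comul_counit (R := k) g
  exact (smul_left_injective k hg0).eq_iff.mp (h.trans (one_smul k g).symm)

variable (k) in
def leftCoidealSpan (Λ : C) : Submodule k C := LinearMap.range (sliceLeft (comul (R := k) Λ))

/-- The comultiplication of `a ∈ V` enters through its lifts `t ∈ C ⊗ V`; when `V` is a left
coideal such a lift exists and is unique. -/
def IsCointegral (g : C) {V : Submodule k C} (φ : Module.Dual k V) : Prop :=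
  ∀ (a : V) (t : C ⊗[k] V), V.subtype.lTensor C t = comul (a : C) → sliceRight t φ = φ a • g

lemma self_mem_leftCoidealSpan (Λ : C) : Λ ∈ leftCoidealSpan k Λ :=
  ⟨counit, sliceLeft_comul_counit Λ⟩

lemma exists_lTensor_subtype_eq_comul (Λ : C) :
    ∃ T : C ⊗[k] leftCoidealSpan k Λ, (leftCoidealSpan k Λ).subtype.lTensor C T = comul Λ :=
  mem_range_lTensor_subtype_of_range_sliceLeft_le le_rfl

section Lift

variable {Λ : C} {T : C ⊗[k] leftCoidealSpan k Λ}

lemma coe_sliceLeft_of_lTensor_eq_comul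
    (hT : (leftCoidealSpan k Λ).subtype.lTensor C T = comul Λ) (ν : Module.Dual k C) :
    (sliceLeft T ν : C) = sliceLeft (comul Λ) ν := by
  rw [← hT, sliceLeft_lTensor]; rfl

lemma sliceRight_injective_of_lTensor_eq_comul
    (hT : (leftCoidealSpan k Λ).subtype.lTensor C T = comul Λ) :
    Function.Injective (sliceRight T) := by
  refine sliceRight_injective_of_surjective_sliceLeft ?_
  rintro ⟨_, ν, rfl⟩
  exact ⟨ν, Subtype.ext (coe_sliceLeft_of_lTensor_eq_comul hT ν)⟩

lemma counit_sliceRight_of_lTensor_eq_comul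
    (hT : (leftCoidealSpan k Λ).subtype.lTensor C T = comul Λ)
    (φ : Module.Dual k (leftCoidealSpan k Λ)) :
    counit (sliceRight T φ) = φ ⟨Λ, self_mem_leftCoidealSpan Λ⟩ := by
  rw [apply_sliceRight]
  congr 1
  ext
  rw [coe_sliceLeft_of_lTensor_eq_comul hT, sliceLeft_comul_counit]

lemma IsCointegral.sliceRight_eq {g : C} {φ : Module.Dual k (leftCoidealSpan k Λ)}
    (hφ : IsCointegral g φ) (hT : (leftCoidealSpan k Λ).subtype.lTensor C T = comul Λ) :
    sliceRight T φ = φ ⟨Λ, self_mem_leftCoidealSpan Λ⟩ • g :=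
  hφ _ T hT

lemma isCointegral_of_sliceRight_eq {g : C} (hg : IsGroupLikeElem k g)
    {φ : Module.Dual k (leftCoidealSpan k Λ)}
    (hT : (leftCoidealSpan k Λ).subtype.lTensor C T = comul Λ)
    (hφ : sliceRight T φ = φ ⟨Λ, self_mem_leftCoidealSpan Λ⟩ • g) : IsCointegral g φ := by
  rintro ⟨_, ν, rfl⟩ t ht
  -- lifts are unique since `C ⊗ -` preserves injections over a field
  have hlift : t = (rightHit ν).rTensor _ T := by
    refine Module.Flat.lTensor_preserves_injective_linearMap _ (Submodule.injective_subtype _) ?_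
    have hcomm : (leftCoidealSpan k Λ).subtype.lTensor C ((rightHit ν).rTensor _ T) =
        (rightHit ν).rTensor C ((leftCoidealSpan k Λ).subtype.lTensor C T) := by
      rw [← LinearMap.comp_apply, ← LinearMap.comp_apply, LinearMap.lTensor_comp_rTensor,
        LinearMap.rTensor_comp_lTensor]
    rw [ht, hcomm, hT]
    exact comul_rightHit ν Λ
  have hslice : φ ⟨_, ν, rfl⟩ = φ ⟨Λ, self_mem_leftCoidealSpan Λ⟩ * ν g := by
    rw [← smul_eq_mul, ← map_smul, ← hφ, apply_sliceRight]
    exact congr_arg φ (Subtype.ext (coe_sliceLeft_of_lTensor_eq_comul hT ν).symm)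
  rw [hlift, sliceRight_rTensor, hφ, map_smul, hg.rightHit_eq_smul, smul_smul, hslice]

end Lift

variable {Λ g : C}

lemma exists_isCointegral_apply_eq_one (hg : IsGroupLikeElem k g)
    (hgΛ : g ∈ LinearMap.range (sliceRight (comul (R := k) Λ))) :
    ∃ φ : Module.Dual k (leftCoidealSpan k Λ),
      IsCointegral g φ ∧ φ ⟨Λ, self_mem_leftCoidealSpan Λ⟩ = 1 := by
  obtain ⟨T, hT⟩ := exists_lTensor_subtype_eq_comul (k := k) Λ
  rw [← hT, range_sliceRight_lTensor_subtype] at hgΛ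
  obtain ⟨φ, hφ⟩ := hgΛ
  have h1 : φ ⟨Λ, self_mem_leftCoidealSpan Λ⟩ = 1 := by
    rw [← counit_sliceRight_of_lTensor_eq_comul hT, hφ, hg.counit_eq_one]
  exact ⟨φ, isCointegral_of_sliceRight_eq hg hT (by rw [h1, one_smul, hφ]), h1⟩

namespace IsCointegral

variable {φ ψ : Module.Dual k (leftCoidealSpan k Λ)}

lemma eq_zero_of_apply_eq_zero (hφ : IsCointegral g φ)
    (h : φ ⟨Λ, self_mem_leftCoidealSpan Λ⟩ = 0) : φ = 0 := by
  obtain ⟨T, hT⟩ := exists_lTensor_subtype_eq_comul (k := k) Λ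
  apply sliceRight_injective_of_lTensor_eq_comul hT
  rw [hφ.sliceRight_eq hT, h, zero_smul, map_zero]

lemma smul_eq_smul (hφ : IsCointegral g φ) (hψ : IsCointegral g ψ) :
    φ ⟨Λ, self_mem_leftCoidealSpan Λ⟩ • ψ = ψ ⟨Λ, self_mem_leftCoidealSpan Λ⟩ • φ := by
  obtain ⟨T, hT⟩ := exists_lTensor_subtype_eq_comul (k := k) Λ
  apply sliceRight_injective_of_lTensor_eq_comul hT
  rw [map_smul, map_smul, hφ.sliceRight_eq hT, hψ.sliceRight_eq hT, smul_smul, smul_smul, mul_comm]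

lemma apply_eq_zero_of_notMem_range (hφ : IsCointegral g φ)
    (hgΛ : g ∉ LinearMap.range (sliceRight (comul (R := k) Λ))) :
    φ ⟨Λ, self_mem_leftCoidealSpan Λ⟩ = 0 := by
  obtain ⟨T, hT⟩ := exists_lTensor_subtype_eq_comul (k := k) Λ
  rw [← hT, range_sliceRight_lTensor_subtype] at hgΛ
  by_contra h
  refine hgΛ ⟨(φ ⟨Λ, self_mem_leftCoidealSpan Λ⟩)⁻¹ • φ, ?_⟩
  rw [map_smul, hφ.sliceRight_eq hT, smul_smul, inv_mul_cancel₀ h, one_smul]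

end IsCointegral

end Field

end Coalgebra

/-- Let `C` be a coalgebra, `g` a group-like element and `Λ ∈ C`, with `VΛ` the
smallest left coideal containing `Λ` and `PV` the smallest right coideal
containing `Λ`.  The space of `g`-cointegrals on `VΛ` is one-dimensional if
`g ∈ PV` and zero otherwise; moreover a `g`-cointegral `φ` is nonzero iff
`φ(Λ) ≠ 0`. -/
theorem gCointegral_dim
    (k C : Type*) [Field k] [AddCommGroup C] [Module k C] [Coalgebra k C]
    (g Λ : C) (hg0 : g ≠ 0) (hg : Coalgebra.comul (R := k) g = g ⊗ₜ[k] g)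
    (VΛ PV : Submodule k C)
    (hV : VΛ = Submodule.span k {x : C | ∃ ν : Module.Dual k C,
      x = (TensorProduct.lid k C)
        ((TensorProduct.map ν LinearMap.id) (Coalgebra.comul (R := k) Λ))})
    (hPV : PV = Submodule.span k {x : C | ∃ ν : Module.Dual k C,
      x = (TensorProduct.rid k C)
        ((TensorProduct.map LinearMap.id ν) (Coalgebra.comul (R := k) Λ))})
    (Coint : Set (Module.Dual k ↥VΛ))
    (hCoint : Coint = {φ : Module.Dual k ↥VΛ |
      ∀ (a : ↥VΛ) (t : C ⊗[k] ↥VΛ),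
        (TensorProduct.map LinearMap.id VΛ.subtype) t = Coalgebra.comul (R := k) (a : C) →
        (TensorProduct.rid k C) ((TensorProduct.map LinearMap.id φ) t) = φ a • g}) :
    (g ∈ PV → ∃ φ ∈ Coint, φ ≠ 0 ∧ ∀ ψ ∈ Coint, ∃ c : k, ψ = c • φ) ∧
    (g ∉ PV → ∀ φ ∈ Coint, φ = 0) ∧
    (∀ φ ∈ Coint, ∀ Λ' : ↥VΛ, (Λ' : C) = Λ → (φ ≠ 0 ↔ φ Λ' ≠ 0)) := by
  have hgl := Coalgebra.isGroupLikeElem_of_comul_eq_tmul_self hg0 hg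
  obtain rfl : VΛ = Coalgebra.leftCoidealSpan k Λ :=
    hV.trans (LinearMap.span_setOf_exists_eq_apply (TensorProduct.sliceLeft (Coalgebra.comul Λ)))
  obtain rfl : PV = LinearMap.range (TensorProduct.sliceRight (Coalgebra.comul (R := k) Λ)) :=
    hPV.trans (LinearMap.span_setOf_exists_eq_apply (TensorProduct.sliceRight (Coalgebra.comul Λ)))
  obtain rfl : Coint = {φ | Coalgebra.IsCointegral g φ} := hCoint
  refine ⟨fun hgΛ => ?_, fun hgΛ φ (hφ : Coalgebra.IsCointegral g φ) =>
    hφ.eq_zero_of_apply_eq_zero (hφ.apply_eq_zero_of_notMem_range hgΛ),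
    fun φ (hφ : Coalgebra.IsCointegral g φ) Λ' hΛ' => ?_⟩
  · obtain ⟨φ, hφ, hφΛ⟩ := Coalgebra.exists_isCointegral_apply_eq_one hgl hgΛ
    refine ⟨φ, hφ, fun h => by simp [h] at hφΛ, fun ψ hψ =>
      ⟨ψ ⟨Λ, Coalgebra.self_mem_leftCoidealSpan Λ⟩, ?_⟩⟩
    simpa [hφΛ] using hφ.smul_eq_smul hψ
  · obtain rfl : Λ' = ⟨Λ, Coalgebra.self_mem_leftCoidealSpan Λ⟩ := Subtype.ext hΛ'
    exact ⟨mt hφ.eq_zero_of_apply_eq_zero, fun h h0 => h (by simp [h0])⟩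
end

section
/- Let A be an algebra over a field k satisfying the biannihilator condition and let μ : A → k be a nonzero multiplicative functional. Then the spaces of left and right μ-integrals L_μ = r(ker μ) and R_μ = l(ker μ) are both nonzero. -/
/-- If an algebra `A` satisfies the biannihilator condition (`l(r(I)) = I` for
left ideals `I` and `r(l(J)) = J` for right ideals `J`), then for every nonzero
multiplicative functional `μ` the spaces of left and right `μ`-integrals are
nonzero. -/
theorem integrals_nonzero_of_biannihilator
    (k A : Type*) [Field k] [Ring A] [Algebra k A]
    (hbl : ∀ I : Submodule k A, (∀ (a : A), ∀ x ∈ I, a * x ∈ I) →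
      {y : A | ∀ x : A, (∀ b ∈ I, b * x = 0) → y * x = 0} = (I : Set A))
    (hbr : ∀ J : Submodule k A, (∀ (a : A), ∀ x ∈ J, x * a ∈ J) →
      {y : A | ∀ x : A, (∀ b ∈ J, x * b = 0) → x * y = 0} = (J : Set A))
    (μ : A →ₐ[k] k) (hμ : ∃ a, μ a ≠ 0) :
    (∃ Λ : A, Λ ≠ 0 ∧ ∀ a : A, a * Λ = μ a • Λ) ∧
    (∃ Λ : A, Λ ≠ 0 ∧ ∀ a : A, Λ * a = μ a • Λ) := by
  set I : Submodule k A := LinearMap.ker μ.toLinearMap with hIdef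
  have hmem : ∀ x : A, x ∈ I ↔ μ x = 0 := by
    intro x; simp [hIdef, LinearMap.mem_ker]
  have hsub : ∀ a : A, a - algebraMap k A (μ a) ∈ I := by
    intro a
    rw [hmem]
    simp
  constructor
  · by_contra h
    push_neg at h
    have hS : ∀ x : A, (∀ b ∈ I, b * x = 0) → x = 0 := by
      intro x hx
      by_contra hx0
      obtain ⟨a, ha⟩ := h x hx0
      apply ha
      have h0 : (a - algebraMap k A (μ a)) * x = 0 := hx _ (hsub a)
      rw [sub_mul, sub_eq_zero] at h0
      rw [h0, Algebra.smul_def]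
    have hI : ∀ (a : A), ∀ x ∈ I, a * x ∈ I := by
      intro a x hx
      rw [hmem] at hx ⊢
      simp [hx]
    have h1 : (1 : A) ∈ {y : A | ∀ x : A, (∀ b ∈ I, b * x = 0) → y * x = 0} := by
      intro x hx
      rw [hS x hx, mul_zero]
    rw [hbl I hI] at h1
    rw [SetLike.mem_coe, hmem] at h1
    simp at h1
  · by_contra h
    push_neg at h
    have hS : ∀ x : A, (∀ b ∈ I, x * b = 0) → x = 0 := by
      intro x hx
      by_contra hx0
      obtain ⟨a, ha⟩ := h x hx0
      apply ha
      have h0 : x * (a - algebraMap k A (μ a)) = 0 := hx _ (hsub a)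
      rw [mul_sub, sub_eq_zero] at h0
      rw [h0, Algebra.smul_def, ← Algebra.commutes]
    have hI : ∀ (a : A), ∀ x ∈ I, x * a ∈ I := by
      intro a x hx
      rw [hmem] at hx ⊢
      simp [hx]
    have h1 : (1 : A) ∈ {y : A | ∀ x : A, (∀ b ∈ I, x * b = 0) → x * y = 0} := by
      intro x hx
      rw [hS x hx, zero_mul]
    rw [hbr I hI] at h1
    rw [SetLike.mem_coe, hmem] at h1
    simp at h1
end

section
/- Let ω be a primitive n-th root of unity in ℂ and H = H_{n²} the Taft Hopf algebra with generators g, x subject to gⁿ = 1, xⁿ = 0, gx = ωxg, with Δ(g) = g ⊗ g and Δ(x) = x ⊗ 1 + g ⊗ x. Fix β ∈ ℂ^×. Then the element P_β = (1/n) Σ_{k=0}^{n−1} (g + βx)^k is an idempotent satisfying Δ(P_β)(1 ⊗ P_β) = P_β ⊗ P_β (i.e. P_β is a right group-like projection). -/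
open scoped TensorProduct

def taftC (ω : ℂ) : ℕ → ℕ → ℂ
  | 0, k => if k = 0 then 1 else 0
  | m+1, 0 => taftC ω m 0
  | m+1, k+1 => ω ^ (k+1) * taftC ω m (k+1) + taftC ω m k

lemma taftC_def0 (ω : ℂ) (m : ℕ) : taftC ω (m+1) 0 = taftC ω m 0 := rfl

lemma taftC_defS (ω : ℂ) (m k : ℕ) :
    taftC ω (m+1) (k+1) = ω ^ (k+1) * taftC ω m (k+1) + taftC ω m k := rfl

lemma taftC_zero (ω : ℂ) : ∀ m, taftC ω m 0 = 1
  | 0 => by simp [taftC]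
  | m+1 => by rw [taftC]; exact taftC_zero ω m

lemma taftC_eq_zero (ω : ℂ) : ∀ m k, m < k → taftC ω m k = 0
  | 0, k+1, _ => by simp [taftC]
  | m+1, k+1, h => by
      rw [taftC, taftC_eq_zero ω m (k+1) (by omega), taftC_eq_zero ω m k (by omega)]
      ring

lemma taftN_eq_zero (ω : ℂ) (m k : ℕ) (h : m < k) :
    ∏ i ∈ Finset.range k, (ω ^ (m - i) - 1) = 0 :=
  Finset.prod_eq_zero (Finset.mem_range.mpr h) (by simp)

lemma taftC_key (ω : ℂ) : ∀ m k,
    (∏ i ∈ Finset.range k, (ω ^ (i+1) - 1)) * taftC ω m k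
      = ∏ i ∈ Finset.range k, (ω ^ (m - i) - 1)
  | 0, 0 => by simp [taftC]
  | 0, k+1 => by
      rw [taftC_eq_zero ω 0 (k+1) (by omega), mul_zero, taftN_eq_zero ω 0 (k+1) (by omega)]
  | m+1, 0 => by simp [taftC_zero]
  | m+1, k+1 => by
      have IH1 := taftC_key ω m (k+1)
      have IH2 := taftC_key ω m k
      rw [Finset.prod_range_succ, Finset.prod_range_succ] at IH1
      have hRHS : ∏ i ∈ Finset.range (k+1), (ω ^ (m + 1 - i) - 1)
          = (ω ^ (m+1) - 1) * ∏ i ∈ Finset.range k, (ω ^ (m - i) - 1) := by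
        rw [Finset.prod_range_succ']
        simp only [Nat.succ_sub_succ_eq_sub, Nat.sub_zero]
        ring
      rw [taftC, Finset.prod_range_succ, hRHS]
      by_cases hk : k ≤ m
      · have hpow : ω ^ (k+1) * ω ^ (m - k) = ω ^ (m+1) := by
          rw [← pow_add]; congr 1; omega
        linear_combination ω^(k+1) * IH1 + (ω^(k+1) - 1) * IH2
          + (∏ i ∈ Finset.range k, (ω ^ (m - i) - 1)) * hpow
      · rw [taftC_eq_zero ω m (k+1) (by omega), taftC_eq_zero ω m k (by omega),
          taftN_eq_zero ω m k (by omega)]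
        ring

lemma taft_gxpow (H : Type*) [Ring H] [Algebra ℂ H] (ω : ℂ) (g x : H)
    (hcomm : g * x = ω • (x * g)) :
    ∀ k, g * x ^ k = ω ^ k • (x ^ k * g)
  | 0 => by simp
  | k+1 => by
    calc g * x ^ (k+1) = (g * x ^ k) * x := by rw [pow_succ, mul_assoc]
    _ = ω ^ k • (x ^ k * (g * x)) := by
        rw [taft_gxpow H ω g x hcomm k, smul_mul_assoc, mul_assoc]
    _ = ω ^ (k+1) • (x ^ (k+1) * g) := by
        rw [hcomm, mul_smul_comm, smul_smul, ← pow_succ, ← mul_assoc, ← pow_succ]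

lemma taft_expand (H : Type*) [Ring H] [Algebra ℂ H] (ω β : ℂ) (g x : H)
    (hcomm : g * x = ω • (x * g)) :
    ∀ m, (g + β • x) ^ m
      = ∑ k ∈ Finset.range (m+1), (taftC ω m k * β ^ k) • (x ^ k * g ^ (m - k))
  | 0 => by simp [taftC_zero]
  | m+1 => by
    have IH := taft_expand H ω β g x hcomm m
    have hterm : ∀ k ∈ Finset.range (m+1),
        (g + β • x) * ((taftC ω m k * β ^ k) • (x ^ k * g ^ (m - k)))
          = (ω ^ k * taftC ω m k * β ^ k) • (x ^ k * g ^ (m + 1 - k))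
            + (taftC ω m k * β ^ (k+1)) • (x ^ (k+1) * g ^ (m - k)) := by
      intro k hk
      have hk' : k ≤ m := Nat.lt_succ_iff.mp (Finset.mem_range.mp hk)
      have h1 : g * (x ^ k * g ^ (m - k)) = ω ^ k • (x ^ k * g ^ (m + 1 - k)) := by
        rw [← mul_assoc, taft_gxpow H ω g x hcomm k, smul_mul_assoc, mul_assoc,
          ← pow_succ', Nat.sub_add_comm hk']
      have h2 : x * (x ^ k * g ^ (m - k)) = x ^ (k+1) * g ^ (m - k) := by
        rw [← mul_assoc, ← pow_succ']
      rw [add_mul, mul_smul_comm, smul_mul_assoc, mul_smul_comm, h1, h2, smul_smul, smul_smul]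
      congr 1
      · congr 1; ring
      · congr 1; ring
    rw [pow_succ', IH, Finset.mul_sum, Finset.sum_congr rfl hterm, Finset.sum_add_distrib]
    have hS1 : (∑ k ∈ Finset.range (m+1), (ω ^ k * taftC ω m k * β ^ k) • (x ^ k * g ^ (m + 1 - k)))
        = taftC ω m 0 • g ^ (m+1)
          + ∑ k ∈ Finset.range (m+1), (ω ^ (k+1) * taftC ω m (k+1) * β ^ (k+1)) • (x ^ (k+1) * g ^ (m - k)) := by
      rw [Finset.sum_range_succ'
        (fun k => (ω ^ k * taftC ω m k * β ^ k) • (x ^ k * g ^ (m + 1 - k))) m]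
      rw [Finset.sum_range_succ
        (fun k => (ω ^ (k+1) * taftC ω m (k+1) * β ^ (k+1)) • (x ^ (k+1) * g ^ (m - k))) m]
      rw [taftC_eq_zero ω m (m+1) (by omega)]
      simp only [Nat.succ_sub_succ_eq_sub, Nat.sub_zero, pow_zero, mul_one, one_mul,
        mul_zero, zero_mul, zero_smul, add_zero]
      rw [add_comm]
    have hRHS : (∑ k ∈ Finset.range (m+1+1), (taftC ω (m+1) k * β ^ k) • (x ^ k * g ^ (m+1 - k)))
        = taftC ω m 0 • g ^ (m+1)
          + ∑ k ∈ Finset.range (m+1), ((ω ^ (k+1) * taftC ω m (k+1) + taftC ω m k) * β ^ (k+1)) • (x ^ (k+1) * g ^ (m - k)) := by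
      rw [Finset.sum_range_succ'
        (fun k => (taftC ω (m+1) k * β ^ k) • (x ^ k * g ^ (m+1 - k))) (m+1)]
      simp only [taftC_defS, taftC_def0, Nat.succ_sub_succ_eq_sub, Nat.sub_zero, pow_zero,
        mul_one, one_mul]
      rw [add_comm]
    rw [hS1, hRHS, add_assoc, ← Finset.sum_add_distrib]
    congr 1
    refine Finset.sum_congr rfl fun k _ => ?_
    rw [← add_smul]
    congr 1
    ring

/-- In the Taft Hopf algebra `H_{n²}` (presented here by a Hopf algebra `H`
over `ℂ` with elements `g, x` satisfying the Taft relations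
`gⁿ = 1`, `xⁿ = 0`, `gx = ωxg`, `Δ(g) = g ⊗ g`, `Δ(x) = x ⊗ 1 + g ⊗ x`,
for `ω` a primitive `n`-th root of unity), for every `β ≠ 0` the element
`P_β = (1/n) ∑_{k<n} (g + βx)^k` is an idempotent satisfying
`Δ(P_β)(1 ⊗ P_β) = (1 ⊗ P_β)Δ(P_β) = P_β ⊗ P_β`, i.e. `P_β` is a right
group-like projection. -/
theorem taft_Pbeta_right_group_like_projection
    (H : Type*) [Ring H] [HopfAlgebra ℂ H]
    (n : ℕ) (hn : 0 < n) (ω : ℂ) (hω : IsPrimitiveRoot ω n)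
    (g x : H) (hgn : g ^ n = 1) (hxn : x ^ n = 0)
    (hcomm : g * x = ω • (x * g))
    (hΔg : Coalgebra.comul (R := ℂ) g = g ⊗ₜ[ℂ] g)
    (hΔx : Coalgebra.comul (R := ℂ) x = x ⊗ₜ[ℂ] (1 : H) + g ⊗ₜ[ℂ] x)
    (β : ℂ) (hβ : β ≠ 0)
    (P : H) (hP : P = (n : ℂ)⁻¹ • ∑ k ∈ Finset.range n, (g + β • x) ^ k) :
    IsIdempotentElem P ∧
    Coalgebra.comul (R := ℂ) P * ((1 : H) ⊗ₜ[ℂ] P) = P ⊗ₜ[ℂ] P ∧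
    ((1 : H) ⊗ₜ[ℂ] P) * Coalgebra.comul (R := ℂ) P = P ⊗ₜ[ℂ] P := by
  -- the coefficients vanish at level n
  have hck : ∀ k, 0 < k → k < n → taftC ω n k = 0 := by
    intro k hk1 hk2
    have hD : (∏ i ∈ Finset.range k, (ω ^ (i+1) - 1)) ≠ 0 := by
      rw [Finset.prod_ne_zero_iff]
      intro i hi
      have hi' : i < k := Finset.mem_range.mp hi
      exact sub_ne_zero.mpr (hω.pow_ne_one_of_pos_of_lt (by omega) (by omega))
    have hkey := taftC_key ω n k
    have hN : (∏ i ∈ Finset.range k, (ω ^ (n - i) - 1)) = 0 := by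
      apply Finset.prod_eq_zero (Finset.mem_range.mpr hk1)
      simp [hω.pow_eq_one]
    rw [hN] at hkey
    exact (mul_eq_zero.mp hkey).resolve_left hD
  -- (g + βx)^n = 1
  have hhn : (g + β • x) ^ n = 1 := by
    rw [taft_expand H ω β g x hcomm n, Finset.sum_eq_single 0]
    · simp [taftC_zero, hgn]
    · intro k hk hk0
      rcases Nat.lt_or_ge k n with h | h
      · rw [hck k (Nat.pos_of_ne_zero hk0) h]; simp
      · have hkn : k = n := by have := Finset.mem_range.mp hk; omega
        subst hkn; rw [hxn]; simp
    · intro h0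
      exact absurd (Finset.mem_range.mpr (by omega)) h0
  -- shifting the geometric sum
  have hshift : ∑ k ∈ Finset.range n, (g + β • x) ^ (k+1)
      = ∑ k ∈ Finset.range n, (g + β • x) ^ k := by
    have h1 := Finset.sum_range_succ (fun k => (g + β • x) ^ k) n
    have h2 := Finset.sum_range_succ' (fun k => (g + β • x) ^ k) n
    rw [h1] at h2
    simp only [hhn, pow_zero] at h2
    exact (add_right_cancel h2).symm
  -- h·P = P and P·h = P
  have hhP : (g + β • x) * P = P := by
    rw [hP, mul_smul_comm, Finset.mul_sum]
    congr 1
    calc ∑ k ∈ Finset.range n, (g + β • x) * (g + β • x) ^ k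
        = ∑ k ∈ Finset.range n, (g + β • x) ^ (k+1) :=
          Finset.sum_congr rfl fun k _ => (pow_succ' _ _).symm
      _ = ∑ k ∈ Finset.range n, (g + β • x) ^ k := hshift
  have hPh : P * (g + β • x) = P := by
    rw [hP, smul_mul_assoc, Finset.sum_mul]
    congr 1
    calc ∑ k ∈ Finset.range n, (g + β • x) ^ k * (g + β • x)
        = ∑ k ∈ Finset.range n, (g + β • x) ^ (k+1) :=
          Finset.sum_congr rfl fun k _ => (pow_succ _ _).symm
      _ = ∑ k ∈ Finset.range n, (g + β • x) ^ k := hshift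
  have hpowP : ∀ k : ℕ, (g + β • x) ^ k * P = P := by
    intro k
    induction k with
    | zero => simp
    | succ k ih => rw [pow_succ', mul_assoc, ih, hhP]
  have hnz : (n : ℂ) ≠ 0 := Nat.cast_ne_zero.mpr hn.ne'
  have hidem : P * P = P := by
    nth_rewrite 1 [hP]
    rw [smul_mul_assoc, Finset.sum_mul,
      Finset.sum_congr rfl (fun k _ => hpowP k), Finset.sum_const, Finset.card_range,
      ← Nat.cast_smul_eq_nsmul ℂ, smul_smul, inv_mul_cancel₀ hnz, one_smul]
  -- comultiplication computations
  set D := Coalgebra.comul (R := ℂ) (g + β • x) with hDdef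
  have hD : D = g ⊗ₜ[ℂ] g + β • (x ⊗ₜ[ℂ] (1 : H)) + β • (g ⊗ₜ[ℂ] x) := by
    rw [hDdef, map_add, map_smul, hΔg, hΔx, smul_add, add_assoc]
  have hstep : ∀ u : H, D * (u ⊗ₜ[ℂ] P) = ((g + β • x) * u) ⊗ₜ[ℂ] P := by
    intro u
    rw [hD, add_mul, add_mul, smul_mul_assoc, smul_mul_assoc,
      Algebra.TensorProduct.tmul_mul_tmul, Algebra.TensorProduct.tmul_mul_tmul,
      Algebra.TensorProduct.tmul_mul_tmul, one_mul]
    rw [add_right_comm, ← TensorProduct.tmul_smul, ← TensorProduct.tmul_add,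
      ← smul_mul_assoc, ← add_mul, hhP, TensorProduct.smul_tmul', ← smul_mul_assoc,
      ← TensorProduct.add_tmul, ← add_mul]
  have hstep' : ∀ u : H, (u ⊗ₜ[ℂ] P) * D = (u * (g + β • x)) ⊗ₜ[ℂ] P := by
    intro u
    rw [hD, mul_add, mul_add, mul_smul_comm, mul_smul_comm,
      Algebra.TensorProduct.tmul_mul_tmul, Algebra.TensorProduct.tmul_mul_tmul,
      Algebra.TensorProduct.tmul_mul_tmul, mul_one]
    rw [add_right_comm, ← TensorProduct.tmul_smul, ← TensorProduct.tmul_add,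
      ← mul_smul_comm, ← mul_add, hPh, TensorProduct.smul_tmul', ← mul_smul_comm,
      ← TensorProduct.add_tmul, ← mul_add]
  have hDk : ∀ k : ℕ, D ^ k * ((1 : H) ⊗ₜ[ℂ] P) = ((g + β • x) ^ k) ⊗ₜ[ℂ] P := by
    intro k
    induction k with
    | zero => simp [Algebra.TensorProduct.one_def]
    | succ k ih => rw [pow_succ', mul_assoc, ih, hstep, ← pow_succ']
  have hDk' : ∀ k : ℕ, ((1 : H) ⊗ₜ[ℂ] P) * D ^ k = ((g + β • x) ^ k) ⊗ₜ[ℂ] P := by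
    intro k
    induction k with
    | zero => simp [Algebra.TensorProduct.one_def]
    | succ k ih => rw [pow_succ, ← mul_assoc, ih, hstep', ← pow_succ]
  have hcomulP : Coalgebra.comul (R := ℂ) P = (n : ℂ)⁻¹ • ∑ k ∈ Finset.range n, D ^ k := by
    rw [hP, map_smul, map_sum]
    exact congrArg _ (Finset.sum_congr rfl fun k _ => Bialgebra.comul_pow _ _)
  refine ⟨hidem, ?_, ?_⟩
  · rw [hcomulP, smul_mul_assoc, Finset.sum_mul,
      Finset.sum_congr rfl (fun k _ => hDk k), ← TensorProduct.sum_tmul,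
      TensorProduct.smul_tmul', ← hP]
  · rw [hcomulP, mul_smul_comm, Finset.mul_sum,
      Finset.sum_congr rfl (fun k _ => hDk' k), ← TensorProduct.sum_tmul,
      TensorProduct.smul_tmul', ← hP]
end

section
/- Let H = H_{n²} be the Taft Hopf algebra and d a divisor of n. Let N_{d,x} be the left coideal subalgebra generated by x and g^d. Then Λ = Σ_{k=0}^{n/d − 1} g^{dk} x^{n−1} is a nonzero left ε-integral in N_{d,x}: aΛ = ε(a)Λ for all a ∈ N_{d,x}. -/
open scoped TensorProduct

/-- In the Taft Hopf algebra `H_{n²}` (presented by a Hopf algebra `H` over `ℂ`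
with elements `g, x` satisfying the Taft relations and with the monomials
`g^i x^j`, `0 ≤ i, j < n`, linearly independent), for every divisor `d` of `n`,
the element `Λ = ∑_{k < n/d} g^{dk} x^{n-1}` is a nonzero left `ε`-integral in
the left coideal subalgebra `N_{d,x}` generated by `x` and `g^d`. -/
theorem taft_Ndx_left_integral
    (H : Type*) [Ring H] [HopfAlgebra ℂ H]
    (n d : ℕ) (hn : 0 < n) (hd0 : 0 < d) (hdn : d ∣ n)
    (ω : ℂ) (hω : IsPrimitiveRoot ω n)
    (g x : H) (hgn : g ^ n = 1) (hxn : x ^ n = 0)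
    (hcomm : g * x = ω • (x * g))
    (hΔg : Coalgebra.comul (R := ℂ) g = g ⊗ₜ[ℂ] g)
    (hΔx : Coalgebra.comul (R := ℂ) x = x ⊗ₜ[ℂ] (1 : H) + g ⊗ₜ[ℂ] x)
    (hεg : Coalgebra.counit (R := ℂ) g = 1)
    (hεx : Coalgebra.counit (R := ℂ) x = 0)
    (hbasis : LinearIndependent ℂ (fun p : Fin n × Fin n => g ^ (p.1 : ℕ) * x ^ (p.2 : ℕ)))
    (Λ : H) (hΛ : Λ = ∑ k ∈ Finset.range (n / d), g ^ (d * k) * x ^ (n - 1)) :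
    Λ ≠ 0 ∧
    ∀ a ∈ Algebra.adjoin ℂ ({x, g ^ d} : Set H),
      a * Λ = Coalgebra.counit (R := ℂ) a • Λ := by
  have hm : 0 < n / d := Nat.div_pos (Nat.le_of_dvd hn hdn) hd0
  have hdkn : ∀ k, k < n / d → d * k < n := by
    intro k hk
    calc d * k < d * (n / d) := (Nat.mul_lt_mul_left hd0).mpr hk
    _ = n := Nat.mul_div_cancel' hdn
  have hω0 : ω ≠ 0 := hω.ne_zero hn.ne'
  -- commutation: g^m * x = ω^m • (x * g^m)
  have hgm : ∀ m : ℕ, g ^ m * x = ω ^ m • (x * g ^ m) := by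
    intro m
    induction m with
    | zero => simp
    | succ m ih =>
      have : g ^ (m + 1) * x = g ^ m * (g * x) := by rw [pow_succ, mul_assoc]
      rw [this, hcomm, mul_smul_comm, ← mul_assoc, ih, smul_mul_assoc,
        mul_assoc, ← pow_succ, pow_succ ω, mul_comm (ω ^ m) ω, mul_smul]
  have hxg : ∀ m : ℕ, x * g ^ m = (ω ^ m)⁻¹ • (g ^ m * x) := by
    intro m
    rw [hgm m, smul_smul, inv_mul_cancel₀ (pow_ne_zero _ hω0), one_smul]
  -- x * Λ = 0
  have hxΛ : x * Λ = 0 := by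
    rw [hΛ, Finset.mul_sum]
    refine Finset.sum_eq_zero fun k _ => ?_
    rw [← mul_assoc, hxg (d * k), smul_mul_assoc, mul_assoc, ← pow_succ',
      Nat.sub_add_cancel hn, hxn, mul_zero, smul_zero]
  -- g^d * Λ = Λ
  have hgΛ : g ^ d * Λ = Λ := by
    rw [hΛ, Finset.mul_sum]
    have key : ∀ k ∈ Finset.range (n / d),
        g ^ d * (g ^ (d * k) * x ^ (n - 1)) = g ^ (d * (k + 1)) * x ^ (n - 1) := by
      intro k _
      rw [← mul_assoc, ← pow_add, Nat.mul_succ, Nat.add_comm]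
    rw [Finset.sum_congr rfl key]
    have h0 : g ^ (d * (n / d)) * x ^ (n - 1) = g ^ (d * 0) * x ^ (n - 1) := by
      rw [Nat.mul_div_cancel' hdn, hgn, Nat.mul_zero, pow_zero]
    calc (∑ k ∈ Finset.range (n / d), g ^ (d * (k + 1)) * x ^ (n - 1))
        = (∑ k ∈ Finset.range (n / d + 1), g ^ (d * k) * x ^ (n - 1))
          - g ^ (d * 0) * x ^ (n - 1) := by
          rw [Finset.sum_range_succ' (fun k => g ^ (d * k) * x ^ (n - 1)) (n / d)]; abel
    _ = (∑ k ∈ Finset.range (n / d), g ^ (d * k) * x ^ (n - 1)) + g ^ (d * (n / d)) * x ^ (n - 1)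
          - g ^ (d * 0) * x ^ (n - 1) := by
          rw [Finset.sum_range_succ (fun k => g ^ (d * k) * x ^ (n - 1)) (n / d)]
    _ = ∑ k ∈ Finset.range (n / d), g ^ (d * k) * x ^ (n - 1) := by rw [h0]; abel
  constructor
  · -- nonzero
    intro h0
    set e : ℕ → Fin n × Fin n := fun k =>
      (⟨d * (k % (n / d)), hdkn _ (Nat.mod_lt _ hm)⟩, ⟨n - 1, Nat.pred_lt hn.ne'⟩) with he
    have heinj : ∀ k ∈ Finset.range (n / d), ∀ l ∈ Finset.range (n / d),
        e k = e l → k = l := by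
      intro k hk l hl hkl
      simp only [he, Prod.mk.injEq, Fin.mk.injEq] at hkl
      have := hkl.1
      rw [Nat.mod_eq_of_lt (Finset.mem_range.mp hk), Nat.mod_eq_of_lt (Finset.mem_range.mp hl)]
        at this
      exact Nat.eq_of_mul_eq_mul_left hd0 this
    have hsum : ∑ p ∈ (Finset.range (n / d)).image e,
        (1 : ℂ) • (g ^ (p.1 : ℕ) * x ^ (p.2 : ℕ)) = 0 := by
      rw [Finset.sum_image (fun k hk l hl h => heinj k hk l hl h)]
      simp only [one_smul, he]
      rw [← h0, hΛ]
      refine Finset.sum_congr rfl fun k hk => ?_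
      rw [Nat.mod_eq_of_lt (Finset.mem_range.mp hk)]
    have := linearIndependent_iff'.mp hbasis _ _ hsum (e 0)
      (Finset.mem_image.mpr ⟨0, Finset.mem_range.mpr hm, rfl⟩)
    exact one_ne_zero this
  · intro a ha
    induction ha using Algebra.adjoin_induction with
    | mem a ha =>
      rcases ha with rfl | ha
      · rw [hεx, hxΛ, zero_smul]
      · rw [Set.mem_singleton_iff.mp ha, hgΛ, Bialgebra.counit_pow, hεg, one_pow, one_smul]
    | algebraMap r =>
      rw [Bialgebra.counit_algebraMap, Algebra.smul_def, Algebra.algebraMap_eq_smul_one,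
        smul_mul_assoc, one_mul]
    | add a b _ _ pa pb => rw [add_mul, pa, pb, map_add, add_smul]
    | mul a b _ _ pa pb =>
      rw [mul_assoc, pb, mul_smul_comm, pa, smul_smul, Bialgebra.counit_mul, mul_comm]
end

section
/- Let H be a Hopf algebra with invertible antipode and P ∈ H a right group-like projection (P² = P ≠ 0, Δ(P)(1 ⊗ P) = (1 ⊗ P)Δ(P) = P ⊗ P). Suppose the coideal subalgebra V_P is a Frobenius algebra with cyclic element y ∈ _P V for the right action a ↦ S(a)y, let ι_y : _P V → V_P be the inverse bijection ι_y(S(a)y) = a, and set z_y = P₍₂₎ ι_y(P₍₁₎) ∈ V_P (Sweedler notation). Then z_y is a central element of V_P, and if z_y is invertible in V_P, then every right V_P-module is completely reducible; in particular V_P is a semisimple algebra. -/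
/-!
Write `c = P₍₂₎ ⊗ ι(P₍₁₎)`; splitting `Δ(P)` along `_P V ⊗ V_P` shows `c ∈ V_P ⊗ V_P`, and
`z` is its product. Since `ι(S(b)x) = ι(x)b` on `_P V`, the key identity
`(1 ⊗ b)Δ(P) = (S(b) ⊗ 1)Δ(P)` says exactly that `b c = c b` in the `V_P`-bimodule `V_P ⊗ V_P`.
Hence `z` is central, and if it is invertible then `c (1 ⊗ z⁻¹)` is a separability idempotent:
averaging any `k`-linear projection onto a submodule against it gives a `V_P`-linear one.
The key identity comes from applying `u ⊗ ω ↦ (S((ν ⊗ id)Δu) ⊗ 1) ω` to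
`(id ⊗ Δ)(Δ(P)(1 ⊗ P)) = P ⊗ Δ(P)` and using `S(a₁)a₂ ⊗ a₃ = 1 ⊗ a`.
-/

open scoped TensorProduct

namespace TensorProduct

open LinearMap

section Support

variable {k M N : Type*} [CommSemiring k] [AddCommMonoid M] [Module k M] [AddCommMonoid N]
  [Module k N]

def leftSupport (t : M ⊗[k] N) : Submodule k M where
  carrier := {m | ∃ ν : Module.Dual k N, m = TensorProduct.rid k M (map LinearMap.id ν t)}
  add_mem' := by
    rintro _ _ ⟨ν, rfl⟩ ⟨ν', rfl⟩
    exact ⟨ν + ν', by rw [map_add_right, LinearMap.add_apply, map_add]⟩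
  zero_mem' := ⟨0, by rw [map_zero_right, LinearMap.zero_apply, map_zero]⟩
  smul_mem' := by
    rintro r _ ⟨ν, rfl⟩
    exact ⟨r • ν, by rw [map_smul_right, LinearMap.smul_apply, map_smul]⟩

def rightSupport (t : M ⊗[k] N) : Submodule k N where
  carrier := {n | ∃ ν : Module.Dual k M, n = TensorProduct.lid k N (map ν LinearMap.id t)}
  add_mem' := by
    rintro _ _ ⟨ν, rfl⟩ ⟨ν', rfl⟩
    exact ⟨ν + ν', by rw [map_add_left, LinearMap.add_apply, map_add]⟩
  zero_mem' := ⟨0, by rw [map_zero_left, LinearMap.zero_apply, map_zero]⟩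
  smul_mem' := by
    rintro r _ ⟨ν, rfl⟩
    exact ⟨r • ν, by rw [map_smul_left, LinearMap.smul_apply, map_smul]⟩

end Support

variable {k M N : Type*} [Field k] [AddCommGroup M] [Module k M] [AddCommGroup N] [Module k N]

theorem mem_range_rTensor_leftSupport (t : M ⊗[k] N) :
    t ∈ range ((leftSupport t).subtype.rTensor N) := by
  classical
  let 𝒞 := Module.Basis.ofVectorSpace k N
  have ht := (equivFinsuppOfBasisRight 𝒞).symm_apply_apply t
  rw [equivFinsuppOfBasisRight_symm_apply] at ht
  suffices h : (equivFinsuppOfBasisRight 𝒞 t).sum (fun j m ↦ m ⊗ₜ 𝒞 j) ∈ _ by rwa [ht] at h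
  exact Submodule.finsuppSum_mem _ _ _ _ fun j _ =>
    ⟨⟨_, 𝒞.coord j, equivFinsuppOfBasisRight_apply 𝒞 t j⟩ ⊗ₜ 𝒞 j, rfl⟩

theorem mem_range_lTensor_rightSupport (t : M ⊗[k] N) :
    t ∈ range ((rightSupport t).subtype.lTensor M) := by
  classical
  let ℬ := Module.Basis.ofVectorSpace k M
  have ht := (equivFinsuppOfBasisLeft ℬ).symm_apply_apply t
  rw [equivFinsuppOfBasisLeft_symm_apply] at ht
  suffices h : (equivFinsuppOfBasisLeft ℬ t).sum (fun i n ↦ ℬ i ⊗ₜ n) ∈ _ by rwa [ht] at h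
  exact Submodule.finsuppSum_mem _ _ _ _ fun i _ =>
    ⟨ℬ i ⊗ₜ ⟨_, ℬ.coord i, equivFinsuppOfBasisLeft_apply ℬ t i⟩, rfl⟩

theorem rightSupport_le_rightSupport_rTensor_subtype {p : Submodule k M} (t : p ⊗[k] N) :
    rightSupport t ≤ rightSupport (p.subtype.rTensor N t) := by
  rintro _ ⟨ν, rfl⟩
  obtain ⟨φ, rfl⟩ := LinearMap.exists_extend ν
  exact ⟨φ, by rw [rTensor_def, map_map, LinearMap.comp_id]⟩

theorem mem_range_mapIncl_leftSupport_rightSupport (t : M ⊗[k] N) :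
    t ∈ range (mapIncl (leftSupport t) (rightSupport t)) := by
  obtain ⟨t₁, ht₁⟩ := mem_range_rTensor_leftSupport t
  obtain ⟨t₂, ht₂⟩ := mem_range_lTensor_rightSupport t₁
  have hle : rightSupport t₁ ≤ rightSupport t :=
    (rightSupport_le_rightSupport_rTensor_subtype t₁).trans (congrArg rightSupport ht₁).le
  refine range_mapIncl_mono le_rfl hle ⟨t₂, ?_⟩
  rw [mapIncl, ← rTensor_comp_lTensor, LinearMap.comp_apply]
  exact (congrArg _ ht₂).trans ht₁

end TensorProduct

section Separable

open TensorProduct LinearMap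

section Semiring

variable {k A : Type*} [CommSemiring k] [Semiring A] [Algebra k A]

/-- `c` commutes with every `b : A` in the `A`-bimodule `A ⊗[k] A`, where `b` acts on the left
factor from the left and on the right factor from the right. -/
def IsCentralTensor (c : A ⊗[k] A) : Prop :=
  ∀ b : A, (mulLeft k b).rTensor A c = (mulRight k b).lTensor A c

lemma mul'_rTensor_mulLeft (b : A) (c : A ⊗[k] A) :
    mul' k A ((mulLeft k b).rTensor A c) = b * mul' k A c := by
  induction c using TensorProduct.induction_on with
  | zero => simp
  | tmul u v => simp [mul_assoc]
  | add c₁ c₂ h₁ h₂ => simp only [map_add, h₁, h₂, mul_add]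

lemma mul'_lTensor_mulRight (b : A) (c : A ⊗[k] A) :
    mul' k A ((mulRight k b).lTensor A c) = mul' k A c * b := by
  induction c using TensorProduct.induction_on with
  | zero => simp
  | tmul u v => simp [mul_assoc]
  | add c₁ c₂ h₁ h₂ => simp only [map_add, h₁, h₂, add_mul]

lemma IsCentralTensor.commute_mul' {c : A ⊗[k] A} (hc : IsCentralTensor c) (b : A) :
    Commute b (mul' k A c) := by
  rw [Commute, SemiconjBy, ← mul'_rTensor_mulLeft, hc b, mul'_lTensor_mulRight]

lemma IsCentralTensor.lTensor_mulRight {c : A ⊗[k] A} (hc : IsCentralTensor c) {w : A}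
    (hw : ∀ b, Commute w b) : IsCentralTensor ((mulRight k w).lTensor A c) := by
  intro b
  rw [← LinearMap.comp_apply, rTensor_comp_lTensor, ← lTensor_comp_rTensor, LinearMap.comp_apply,
    hc b, ← LinearMap.comp_apply, ← lTensor_comp, ← LinearMap.comp_apply, ← lTensor_comp]
  congr 2
  ext x
  simp [mul_assoc, (hw b).eq]

variable {M N : Type*} [AddCommMonoid M] [Module A M] [Module k M] [IsScalarTower k A M]
  [AddCommMonoid N] [Module A N] [Module k N] [IsScalarTower k A N]

noncomputable def LinearMap.average (f : M →ₗ[k] N) : A ⊗[k] A →ₗ[k] M →ₗ[k] N :=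
  TensorProduct.lift <| LinearMap.mk₂ k
    (fun u v => Algebra.lsmul k k N u ∘ₗ f ∘ₗ Algebra.lsmul k k M v)
    (fun u u' v => by ext; simp)
    (fun r u v => by ext; simp)
    (fun u v v' => by ext; simp)
    (fun r u v => by ext; simp [smul_comm u r])

@[simp]
lemma LinearMap.average_tmul (f : M →ₗ[k] N) (u v : A) (m : M) :
    f.average (u ⊗ₜ v) m = u • f (v • m) := rfl

lemma LinearMap.average_rTensor_mulLeft (f : M →ₗ[k] N) (b : A) (t : A ⊗[k] A) (m : M) :
    f.average ((mulLeft k b).rTensor A t) m = b • f.average t m := by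
  induction t using TensorProduct.induction_on with
  | zero => simp
  | tmul u v => simp [mul_smul]
  | add t₁ t₂ h₁ h₂ => simp only [map_add, LinearMap.add_apply, h₁, h₂, smul_add]

lemma LinearMap.average_lTensor_mulRight (f : M →ₗ[k] N) (b : A) (t : A ⊗[k] A) (m : M) :
    f.average ((mulRight k b).lTensor A t) m = f.average t (b • m) := by
  induction t using TensorProduct.induction_on with
  | zero => simp
  | tmul u v => simp [mul_smul]
  | add t₁ t₂ h₁ h₂ => simp only [map_add, LinearMap.add_apply, h₁, h₂]

lemma LinearMap.average_apply_of_map_smul (f : M →ₗ[k] N) (t : A ⊗[k] A) {m : M}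
    (hm : ∀ v : A, f (v • m) = v • f m) : f.average t m = mul' k A t • f m := by
  induction t using TensorProduct.induction_on with
  | zero => simp
  | tmul u v => simp [hm, mul_smul]
  | add t₁ t₂ h₁ h₂ => simp only [map_add, LinearMap.add_apply, h₁, h₂, add_smul]

end Semiring

variable {k A M : Type*} [Field k] [Ring A] [Algebra k A]
  [AddCommGroup M] [Module A M] [Module k M] [IsScalarTower k A M]

theorem IsCentralTensor.isSemisimpleModule {c : A ⊗[k] A} (hc : IsCentralTensor c)
    (hc1 : mul' k A c = 1) : IsSemisimpleModule A M where
  exists_isCompl p := by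
    obtain ⟨π, hπ⟩ :=
      LinearMap.exists_leftInverse_of_injective (p.subtype.restrictScalars k) (by simp)
    have hπp (x : p) : π x = x := LinearMap.congr_fun hπ x
    let g : M →ₗ[A] p :=
      { π.average c with
        map_smul' := fun b m => by
          simp only [AddHom.toFun_eq_coe, LinearMap.coe_toAddHom, RingHom.id_apply]
          rw [← average_lTensor_mulRight, ← hc b, average_rTensor_mulLeft] }
    refine ⟨LinearMap.ker g, LinearMap.isCompl_of_proj fun x => ?_⟩
    have hπ_smul (v : A) : π (v • (x : M)) = v • π x := by
      rw [← Submodule.coe_smul, hπp, hπp]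
    change π.average c x = x
    rw [average_apply_of_map_smul π c hπ_smul, hc1, one_smul, hπp]

theorem IsCentralTensor.isSemisimpleModule_of_isUnit {c : A ⊗[k] A} (hc : IsCentralTensor c)
    (hu : IsUnit (mul' k A c)) : IsSemisimpleModule A M := by
  obtain ⟨u, hu⟩ := hu
  refine (hc.lTensor_mulRight (w := ↑u⁻¹) fun b => ?_).isSemisimpleModule ?_
  · exact ((hu ▸ hc.commute_mul' b).units_inv_right).symm
  · rw [mul'_lTensor_mulRight, ← hu, Units.mul_inv]

end Separable

section Casimir

open TensorProduct LinearMap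

theorem exists_isCentralTensor_mul'_eq {k H : Type*} [Field k] [Ring H] [Algebra k H]
    {A : Subalgebra k H} {p : Submodule k H} {T : H ⊗[k] H}
    (hT : T ∈ range (map p.subtype A.val.toLinearMap)) {σ : H → H}
    (hσ : ∀ b ∈ A, ((1 : H) ⊗ₜ[k] b) * T = (σ b ⊗ₜ[k] (1 : H)) * T) {ι : H →ₗ[k] H}
    (hιA : ∀ x ∈ p, ι x ∈ A) (hι : ∀ x ∈ p, ∀ b ∈ A, ι (σ b * x) = ι x * b) :
    ∃ c : A ⊗[k] A, IsCentralTensor c ∧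
      (mul' k A c : H) = mul' k H (TensorProduct.comm k H H (map ι LinearMap.id T)) := by
  obtain ⟨T', rfl⟩ := hT
  let V := A.val.toLinearMap
  let ιA : p →ₗ[k] A :=
    (ι ∘ₗ p.subtype).codRestrict (Subalgebra.toSubmodule A) fun x => hιA x x.2
  have hιA_apply (x : p) : (ιA x : H) = ι x := rfl
  let casimir : p ⊗[k] A →ₗ[k] A ⊗[k] A :=
    (TensorProduct.comm k A A).toLinearMap ∘ₗ map ιA LinearMap.id
  have hV : Function.Injective (map V V) :=
    map_injective_of_flat_flat _ _ Subtype.val_injective Subtype.val_injective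
  have hleft (b : A) (t : p ⊗[k] A) : map V V ((mulLeft k b).rTensor A (casimir t)) =
      TensorProduct.comm k H H
        (map ι LinearMap.id (((1 : H) ⊗ₜ[k] (b : H)) * map p.subtype V t)) := by
    induction t using TensorProduct.induction_on with
    | zero => simp
    | tmul x y => simp [casimir, hιA_apply, V]
    | add t₁ t₂ h₁ h₂ => simp only [map_add, mul_add, h₁, h₂]
  have hright (b : A) (t : p ⊗[k] A) : map V V ((mulRight k b).lTensor A (casimir t)) =
      TensorProduct.comm k H H
        (map ι LinearMap.id ((σ b ⊗ₜ[k] (1 : H)) * map p.subtype V t)) := by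
    induction t using TensorProduct.induction_on with
    | zero => simp
    | tmul x y => simp [casimir, hιA_apply, V, hι x x.2 b b.2]
    | add t₁ t₂ h₁ h₂ => simp only [map_add, mul_add, h₁, h₂]
  have hmul (t : p ⊗[k] A) : (mul' k A (casimir t) : H) =
      mul' k H (TensorProduct.comm k H H (map ι LinearMap.id (map p.subtype V t))) := by
    induction t using TensorProduct.induction_on with
    | zero => simp
    | tmul x y => simp [casimir, hιA_apply, V]
    | add t₁ t₂ h₁ h₂ => simp only [map_add, Subalgebra.coe_add, h₁, h₂]
  exact ⟨casimir T', fun b => hV (by rw [hleft, hright, hσ b b.2]), hmul T'⟩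

end Casimir

section Hopf

open TensorProduct LinearMap Coalgebra HopfAlgebra

variable {R H : Type*} [CommSemiring R] [Semiring H] [HopfAlgebra R H]

lemma sum_antipode_tmul_one_mul_comul {a : H} {ι : Type*} (𝓡 : Repr R a ι) :
    ∑ i ∈ 𝓡.index, (antipode R (𝓡.left i) ⊗ₜ[R] (1 : H)) * comul (𝓡.right i) = 1 ⊗ₜ a := by
  let F : H ⊗[R] (H ⊗[R] H) →ₗ[R] H ⊗[R] H := TensorProduct.lift
    (LinearMap.mul R (H ⊗[R] H) ∘ₗ Algebra.TensorProduct.includeLeft.toLinearMap ∘ₗ antipode R)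
  have hF : F ∘ₗ (TensorProduct.assoc R H H H).toLinearMap =
      (LinearMap.mul' R H ∘ₗ (antipode R).rTensor H).rTensor H := by
    ext u v w
    simp [F, Algebra.TensorProduct.tmul_mul_tmul]
  calc _ = F (comul.lTensor H (comul a)) := by
        simp [F, ← 𝓡.eq, map_sum]
    _ = (LinearMap.mul' R H ∘ₗ (antipode R).rTensor H ∘ₗ comul).rTensor H (comul a) := by
        rw [← coassoc_apply, ← LinearEquiv.coe_coe, ← LinearMap.comp_apply, hF]
        simp only [rTensor_comp, LinearMap.comp_apply]
    _ = 1 ⊗ₜ a := by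
        rw [mul_antipode_rTensor_comul, rTensor_comp_apply, rTensor_counit_comul]
        simp

lemma comul_lid_map_comul (ν : Module.Dual R H) (a : H) :
    comul (TensorProduct.lid R H (map ν LinearMap.id (comul a))) =
      (TensorProduct.lid R H ∘ₗ map ν LinearMap.id ∘ₗ comul).rTensor H (comul a) := by
  have h₁ : comul ∘ₗ (TensorProduct.lid R H).toLinearMap ∘ₗ map ν LinearMap.id =
      (TensorProduct.lid R (H ⊗[R] H)).toLinearMap ∘ₗ map ν LinearMap.id ∘ₗ comul.lTensor H := by
    ext; simp
  have h₂ : (TensorProduct.lid R (H ⊗[R] H)).toLinearMap ∘ₗ map ν LinearMap.id ∘ₗ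
      (TensorProduct.assoc R H H H).toLinearMap =
      ((TensorProduct.lid R H).toLinearMap ∘ₗ map ν LinearMap.id).rTensor H := by
    ext; simp [smul_tmul']
  calc _ = TensorProduct.lid R (H ⊗[R] H) (map ν LinearMap.id
        (TensorProduct.assoc R H H H (comul.rTensor H (comul a)))) := by
        rw [coassoc_apply]; exact congr($h₁ (comul a))
    _ = _ := by
        rw [← LinearMap.comp_assoc, rTensor_comp_apply]
        exact congr($h₂ (comul.rTensor H (comul a)))

theorem one_tmul_mul_comul_eq_antipode_tmul_one_mul_comul {P : H}
    (hP : comul P * ((1 : H) ⊗ₜ[R] P) = P ⊗ₜ[R] P) {b : H}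
    (hb : b ∈ rightSupport (comul (R := R) P)) :
    ((1 : H) ⊗ₜ[R] b) * comul P = (antipode R b ⊗ₜ[R] (1 : H)) * comul P := by
  obtain ⟨ν, rfl⟩ := hb
  let β : H →ₗ[R] H := TensorProduct.lid R H ∘ₗ map ν LinearMap.id ∘ₗ comul
  change ((1 : H) ⊗ₜ[R] β P) * comul P = (antipode R (β P) ⊗ₜ[R] (1 : H)) * comul P
  let 𝓡 := ℛ R P
  have h₁ : ∑ i ∈ 𝓡.index, 𝓡.left i ⊗ₜ (comul (R := R) (𝓡.right i) * comul P) =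
      P ⊗ₜ[R] comul P := by
    have hmap : Algebra.TensorProduct.map (AlgHom.id R H) (Bialgebra.comulAlgHom R H) (comul P) =
        ∑ i ∈ 𝓡.index, 𝓡.left i ⊗ₜ comul (R := R) (𝓡.right i) := by
      rw [← 𝓡.eq]; simp [map_sum]
    have := congr(Algebra.TensorProduct.map (AlgHom.id R H) (Bialgebra.comulAlgHom R H) $hP)
    simpa [hmap, Finset.sum_mul, Algebra.TensorProduct.tmul_mul_tmul] using this
  let G : H ⊗[R] (H ⊗[R] H) →ₗ[R] H ⊗[R] H := TensorProduct.lift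
    (LinearMap.mul R (H ⊗[R] H) ∘ₗ Algebra.TensorProduct.includeLeft.toLinearMap ∘ₗ
      antipode R ∘ₗ β)
  have h₂ := congr(G $h₁)
  simp only [map_sum, G, lift.tmul] at h₂
  let 𝓡β : Repr R (β P) (H × H) :=
    { index := 𝓡.index, left := β ∘ 𝓡.left, right := 𝓡.right
      eq := by
        rw [show β P = TensorProduct.lid R H (map ν LinearMap.id (comul P)) from rfl,
          comul_lid_map_comul, ← 𝓡.eq, map_sum]
        rfl }
  calc _ = (∑ i ∈ 𝓡.index, (antipode R (β (𝓡.left i)) ⊗ₜ[R] (1 : H)) *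
        comul (𝓡.right i)) * comul P := by
        rw [← sum_antipode_tmul_one_mul_comul 𝓡β]; rfl
    _ = _ := by
        simpa [Finset.sum_mul, mul_assoc] using h₂

end Hopf

theorem group_like_projection_semisimple_of_invertible_general
    (k H : Type*) [Field k] [Ring H] [HopfAlgebra k H]
    (P : H)
    (hgl1 : Coalgebra.comul (R := k) P * ((1 : H) ⊗ₜ[k] P) = P ⊗ₜ[k] P)
    (VP : Subalgebra k H)
    (hVP : (VP : Set H) = {z : H | ∃ ν : Module.Dual k H,
      z = (TensorProduct.lid k H)
        ((TensorProduct.map ν LinearMap.id) (Coalgebra.comul (R := k) P))})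
    (PV : Set H)
    (hPV : PV = {z : H | ∃ ν : Module.Dual k H,
      z = (TensorProduct.rid k H)
        ((TensorProduct.map LinearMap.id ν) (Coalgebra.comul (R := k) P))})
    (y : H)
    (hcyc : Set.BijOn (fun a => HopfAlgebra.antipode (R := k) a * y) (VP : Set H) PV)
    (ι : H →ₗ[k] H) (hι : ∀ a ∈ VP, ι (HopfAlgebra.antipode (R := k) a * y) = a)
    (z : H)
    (hz : z = LinearMap.mul' k H ((TensorProduct.comm k H H)
      ((TensorProduct.map ι LinearMap.id) (Coalgebra.comul (R := k) P)))) :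
    z ∈ VP ∧
    (∀ b ∈ VP, b * z = z * b) ∧
    ((∃ w ∈ VP, z * w = 1 ∧ w * z = 1) →
      IsSemisimpleRing (↥VP)ᵐᵒᵖ ∧ IsSemisimpleRing ↥VP) := by
  have hVP' (b : H) : b ∈ VP ↔ b ∈ TensorProduct.rightSupport (Coalgebra.comul (R := k) P) := by
    rw [← SetLike.mem_coe, hVP]; rfl
  have hFrob (x : H) (hx : x ∈ TensorProduct.leftSupport (Coalgebra.comul (R := k) P)) :
      ι x ∈ VP ∧ ∀ b ∈ VP, ι (HopfAlgebra.antipode k b * x) = ι x * b := by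
    obtain ⟨a, ha, rfl⟩ := hcyc.surjOn (by rw [hPV]; exact hx)
    refine ⟨(hι a ha).symm ▸ ha, fun b hb => ?_⟩
    rw [← mul_assoc, ← HopfAlgebra.antipode_mul_antidistrib, hι _ (VP.mul_mem ha hb), hι a ha]
  have hT : Coalgebra.comul (R := k) P ∈ LinearMap.range (TensorProduct.map
      (TensorProduct.leftSupport (Coalgebra.comul (R := k) P)).subtype VP.val.toLinearMap) :=
    TensorProduct.range_map_mono le_rfl
      (by rintro _ ⟨⟨b, hb⟩, rfl⟩; exact ⟨⟨b, (hVP' b).2 hb⟩, rfl⟩)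
      (TensorProduct.mem_range_mapIncl_leftSupport_rightSupport _)
  obtain ⟨c, hc, hcz⟩ := exists_isCentralTensor_mul'_eq hT
    (fun b hb => one_tmul_mul_comul_eq_antipode_tmul_one_mul_comul hgl1 ((hVP' b).1 hb))
    (fun x hx => (hFrob x hx).1) (fun x hx => (hFrob x hx).2)
  rw [← hz] at hcz
  refine ⟨hcz ▸ (LinearMap.mul' k VP c).2, fun b hb => ?_, fun ⟨w, hw, hzw, hwz⟩ => ?_⟩
  · rw [← hcz]
    exact congrArg Subtype.val (hc.commute_mul' ⟨b, hb⟩)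
  · have : IsSemisimpleRing VP := hc.isSemisimpleModule_of_isUnit
      ⟨⟨_, ⟨w, hw⟩, Subtype.ext (by simpa [hcz]), Subtype.ext (by simpa [hcz])⟩, rfl⟩
    exact ⟨inferInstance, this⟩

/-- Let `P` be a right group-like projection in a Hopf algebra `H` with
invertible antipode, let `VP` be the smallest left coideal containing `P`
(a unital subalgebra) and `PV` the smallest right coideal containing `P`.
Assume `VP` is Frobenius with cyclic element `y ∈ PV` (i.e. `a ↦ S(a)y` is a
bijection from `VP` onto `PV`), let `ι` be the inverse bijection
(`ι(S(a)y) = a`), and set `z = P₍₂₎ ι(P₍₁₎)`.  Then `z ∈ VP`, `z` is central in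
`VP`, and if `z` is invertible in `VP` then every right `VP`-module is
completely reducible; in particular `VP` is semisimple. -/
theorem group_like_projection_semisimple_of_invertible
    (k H : Type*) [Field k] [Ring H] [HopfAlgebra k H]
    (hS : Function.Bijective (HopfAlgebra.antipode (R := k) (A := H)))
    (P : H) (hP0 : P ≠ 0) (hPidem : IsIdempotentElem P)
    (hgl1 : Coalgebra.comul (R := k) P * ((1 : H) ⊗ₜ[k] P) = P ⊗ₜ[k] P)
    (hgl2 : ((1 : H) ⊗ₜ[k] P) * Coalgebra.comul (R := k) P = P ⊗ₜ[k] P)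
    (VP : Subalgebra k H)
    (hVP : (VP : Set H) = {z : H | ∃ ν : Module.Dual k H,
      z = (TensorProduct.lid k H)
        ((TensorProduct.map ν LinearMap.id) (Coalgebra.comul (R := k) P))})
    (PV : Set H)
    (hPV : PV = {z : H | ∃ ν : Module.Dual k H,
      z = (TensorProduct.rid k H)
        ((TensorProduct.map LinearMap.id ν) (Coalgebra.comul (R := k) P))})
    (y : H) (hy : y ∈ PV)
    (hcyc : Set.BijOn (fun a => HopfAlgebra.antipode (R := k) a * y) (VP : Set H) PV)
    (ι : H →ₗ[k] H) (hι : ∀ a ∈ VP, ι (HopfAlgebra.antipode (R := k) a * y) = a)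
    (z : H)
    (hz : z = LinearMap.mul' k H ((TensorProduct.comm k H H)
      ((TensorProduct.map ι LinearMap.id) (Coalgebra.comul (R := k) P)))) :
    z ∈ VP ∧
    (∀ b ∈ VP, b * z = z * b) ∧
    ((∃ w ∈ VP, z * w = 1 ∧ w * z = 1) →
      IsSemisimpleRing (↥VP)ᵐᵒᵖ ∧ IsSemisimpleRing ↥VP) :=
  group_like_projection_semisimple_of_invertible_general k H P hgl1 VP hVP PV hPV y hcyc ι hι z hz
end
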